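/- arXiv:math/0305136 — 4 statements merged into one kernel-verified Lean document; each statement's English description precedes it below -/
import Mathlib

section
/- Let ι be a D2 Frobenius 1-morphism with D2 quasi-basis ∑ᵢ yᵢ ⊗ xᵢ. Then the ring homomorphism s_L : L → A, l ↦ l × ῑ, from L = C²(ι,ι) to A = C²(ι×ῑ, ι×ῑ) is a Frobenius extension: the L-bimodule map φ_L : A → L, φ_L(a) = (ι × ev_L) ∘ (a × ι) ∘ (ι × coev_R) (with appropriate coherence cells), satisfies ∑ᵢ s_L(φ_L(a ∘ yᵢ)) ∘ xᵢ = a = ∑ᵢ yᵢ ∘ s_L(φ_L(xᵢ ∘ a)) for all a ∈ A. -/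
open CategoryTheory Bicategory

universe w v u

variable {C : Type u} [Bicategory.{w, v} C] {a b : C}

/-- Duality data exhibiting `κ` as a two-sided dual of `ι`: `(evL, coevL)` exhibit a
left-dual pair and `(evR, coevR)` a right-dual pair, all four snake identities holding. -/
structure FrobeniusDuality (ι : a ⟶ b) (κ : b ⟶ a) where
  evL : κ ≫ ι ⟶ 𝟙 b
  coevL : 𝟙 a ⟶ ι ≫ κ
  evR : ι ≫ κ ⟶ 𝟙 a
  coevR : 𝟙 b ⟶ κ ≫ ι
  zig1 : (λ_ ι).inv ≫ coevL ▷ ι ≫ (α_ ι κ ι).hom ≫ ι ◁ evL ≫ (ρ_ ι).hom = 𝟙 ι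
  zig2 : (ρ_ κ).inv ≫ κ ◁ coevL ≫ (α_ κ ι κ).inv ≫ evL ▷ κ ≫ (λ_ κ).hom = 𝟙 κ
  zig3 : (ρ_ ι).inv ≫ ι ◁ coevR ≫ (α_ ι κ ι).inv ≫ evR ▷ ι ≫ (λ_ ι).hom = 𝟙 ι
  zig4 : (λ_ κ).inv ≫ coevR ▷ κ ≫ (α_ κ ι κ).hom ≫ κ ◁ evR ≫ (ρ_ κ).hom = 𝟙 κ

namespace FrobeniusDuality

variable {ι : a ⟶ b} {κ : b ⟶ a} (D : FrobeniusDuality ι κ)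

/-- The Fourier transformation `F`, bending the legs of a 2-endomorphism of `ι ≫ κ`
using `coevR` and `evL`. -/
def Ftr (x : ι ≫ κ ⟶ ι ≫ κ) : κ ≫ ι ⟶ κ ≫ ι :=
  (λ_ (κ ≫ ι)).inv ≫ D.coevR ▷ (κ ≫ ι) ≫ (α_ κ ι (κ ≫ ι)).hom ≫
    κ ◁ ((α_ ι κ ι).inv ≫ x ▷ ι ≫ (α_ ι κ ι).hom) ≫
    (α_ κ ι (κ ≫ ι)).inv ≫ (κ ≫ ι) ◁ D.evL ≫ (ρ_ (κ ≫ ι)).hom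

/-- The inverse Fourier transformation, bending legs using `coevL` and `evR`. -/
def FtrInv (y : κ ≫ ι ⟶ κ ≫ ι) : ι ≫ κ ⟶ ι ≫ κ :=
  (ρ_ (ι ≫ κ)).inv ≫ (ι ≫ κ) ◁ D.coevL ≫ (α_ ι κ (ι ≫ κ)).hom ≫
    ι ◁ ((α_ κ ι κ).inv ≫ y ▷ κ ≫ (α_ κ ι κ).hom) ≫
    (α_ ι κ (ι ≫ κ)).inv ≫ D.evR ▷ (ι ≫ κ) ≫ (λ_ (ι ≫ κ)).hom

/-- The second Fourier transformation `Ḟ`, with `coevR` and `evL` attached on the other sides. -/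
def Fdot (x : ι ≫ κ ⟶ ι ≫ κ) : κ ≫ ι ⟶ κ ≫ ι :=
  (ρ_ (κ ≫ ι)).inv ≫ (κ ≫ ι) ◁ D.coevR ≫ (α_ κ ι (κ ≫ ι)).hom ≫
    κ ◁ ((α_ ι κ ι).inv ≫ x ▷ ι ≫ (α_ ι κ ι).hom) ≫
    (α_ κ ι (κ ≫ ι)).inv ≫ D.evL ▷ (κ ≫ ι) ≫ (λ_ (κ ≫ ι)).hom

/-- The inverse of the second Fourier transformation. -/
def FdotInv (y : κ ≫ ι ⟶ κ ≫ ι) : ι ≫ κ ⟶ ι ≫ κ :=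
  (λ_ (ι ≫ κ)).inv ≫ D.coevL ▷ (ι ≫ κ) ≫ (α_ ι κ (ι ≫ κ)).hom ≫
    ι ◁ ((α_ κ ι κ).inv ≫ y ▷ κ ≫ (α_ κ ι κ).hom) ≫
    (α_ ι κ (ι ≫ κ)).inv ≫ (ι ≫ κ) ◁ D.evR ≫ (ρ_ (ι ≫ κ)).hom

/-- The convolution product on `C²(ι×κ, ι×κ)`, contracting the middle legs with
`coevR` and `evL`.  (Vertical composition in the paper is `x ∘ y = y ≫ x`.) -/
def conv (x y : ι ≫ κ ⟶ ι ≫ κ) : ι ≫ κ ⟶ ι ≫ κ :=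
  ι ◁ (λ_ κ).inv ≫ ι ◁ (D.coevR ▷ κ) ≫ ι ◁ (α_ κ ι κ).hom ≫
    (α_ ι κ (ι ≫ κ)).inv ≫ x ▷ (ι ≫ κ) ≫ (ι ≫ κ) ◁ y ≫
    (α_ ι κ (ι ≫ κ)).hom ≫ ι ◁ (α_ κ ι κ).inv ≫ ι ◁ (D.evL ▷ κ) ≫ ι ◁ (λ_ κ).hom

/-- The convolution product on `C²(κ×ι, κ×ι)`, contracting the middle legs with
`coevL` and `evR`. -/
def convB (x y : κ ≫ ι ⟶ κ ≫ ι) : κ ≫ ι ⟶ κ ≫ ι :=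
  κ ◁ (λ_ ι).inv ≫ κ ◁ (D.coevL ▷ ι) ≫ κ ◁ (α_ ι κ ι).hom ≫
    (α_ κ ι (κ ≫ ι)).inv ≫ x ▷ (κ ≫ ι) ≫ (κ ≫ ι) ◁ y ≫
    (α_ κ ι (κ ≫ ι)).hom ≫ κ ◁ (α_ ι κ ι).inv ≫ κ ◁ (D.evR ▷ ι) ≫ κ ◁ (λ_ ι).hom

/-- The convolution unit `i_A = coev_L ∘ ev_R`. -/
def iA : ι ≫ κ ⟶ ι ≫ κ := D.evR ≫ D.coevL

/-- The convolution unit `i_B = coev_R ∘ ev_L`. -/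
def iB : κ ≫ ι ⟶ κ ≫ ι := D.evL ≫ D.coevR

/-- The antipode `S_A = Ḟ⁻¹ ∘ F`. -/
def SA (x : ι ≫ κ ⟶ ι ≫ κ) : ι ≫ κ ⟶ ι ≫ κ := D.FdotInv (D.Ftr x)

/-- The inverse antipode `S_A⁻¹ = F⁻¹ ∘ Ḟ`. -/
def SAinv (x : ι ≫ κ ⟶ ι ≫ κ) : ι ≫ κ ⟶ ι ≫ κ := D.FtrInv (D.Fdot x)

/-- The anti-isomorphism `ν : L → R^op` (conjugation with `evR`/`coevR`). -/
def nu (l : ι ⟶ ι) : κ ⟶ κ :=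
  (λ_ κ).inv ≫ D.coevR ▷ κ ≫ (α_ κ ι κ).hom ≫ κ ◁ (l ▷ κ) ≫ κ ◁ D.evR ≫ (ρ_ κ).hom

/-- The anti-isomorphism `μ : L → R^op` (conjugation with `evL`/`coevL`). -/
def mu (l : ι ⟶ ι) : κ ⟶ κ :=
  (ρ_ κ).inv ≫ κ ◁ D.coevL ≫ (α_ κ ι κ).inv ≫ (κ ◁ l) ▷ κ ≫ D.evL ▷ κ ≫ (λ_ κ).hom

/-- The Frobenius map `φ_L : A → L`. -/
def phiL (x : ι ≫ κ ⟶ ι ≫ κ) : ι ⟶ ι :=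
  (ρ_ ι).inv ≫ ι ◁ D.coevR ≫ (α_ ι κ ι).inv ≫ x ▷ ι ≫ (α_ ι κ ι).hom ≫ ι ◁ D.evL ≫ (ρ_ ι).hom

/-- Source map of the left bialgebroid `s_L : L → A`, `l ↦ l × κ`. -/
def sL (_D : FrobeniusDuality ι κ) (l : ι ⟶ ι) : ι ≫ κ ⟶ ι ≫ κ := l ▷ κ

/-- Target map of the left bialgebroid `t_L : L → A`, `l ↦ ι × μ(l)`. -/
def tL (l : ι ⟶ ι) : ι ≫ κ ⟶ ι ≫ κ := ι ◁ D.mu l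

/-- Source map of the right bialgebroid `s_R : R → A`, `r ↦ ι × r`. -/
def sR (_D : FrobeniusDuality ι κ) (r : κ ⟶ κ) : ι ≫ κ ⟶ ι ≫ κ := ι ◁ r

/-- Target map of the right bialgebroid `t_R : R → A`, `r ↦ ν⁻¹(r) × κ`. -/
noncomputable def tR (r : κ ⟶ κ) : ι ≫ κ ⟶ ι ≫ κ :=
  (@Function.invFun (ι ⟶ ι) (κ ⟶ κ) ⟨𝟙 ι⟩ D.nu r) ▷ κ

/-- The counit `π_L(a) = φ_L(a ∘ i_A)`. -/
def piL (x : ι ≫ κ ⟶ ι ≫ κ) : ι ⟶ ι := D.phiL (D.iA ≫ x)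

/-- The counit `π_R(a) = ν(φ_L(S_A⁻¹(a) ∘ i_A))`. -/
def piR (x : ι ≫ κ ⟶ ι ≫ κ) : κ ⟶ κ := D.nu (D.phiL (D.iA ≫ D.SAinv x))

/-- The composite `(y × ι) ∘ α⁻¹ ∘ (ι × coevR) ∘ (ι × evL) ∘ α ∘ (x × ι)` appearing in
the depth-2 quasi-basis identity. -/
def d2comp (x y : ι ≫ κ ⟶ ι ≫ κ) : (ι ≫ κ) ≫ ι ⟶ (ι ≫ κ) ≫ ι :=
  x ▷ ι ≫ (α_ ι κ ι).hom ≫ ι ◁ D.evL ≫ ι ◁ D.coevR ≫ (α_ ι κ ι).inv ≫ y ▷ ι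

end FrobeniusDuality

/-!
Whisker the quasi-basis identity `∑ᵢ d2comp xᵢ yᵢ = 𝟙` by `κ`, compose with `z ▷ ι ▷ κ`
after (resp. before) it, and close the extra `ι ≫ κ` strands with `coevL` and `evL` (resp. `coevR`
and `evR`).  Each summand then straightens into `xᵢ ≫ s_L (φ_L (yᵢ ≫ z))`
(resp. `s_L (φ_L (z ≫ xᵢ)) ≫ yᵢ`), while the right-hand side `𝟙` straightens into `z` by the
snake identity `zig2` (resp. `zig4`).  Additivity of whiskering lets the sum pass through.
-/

lemma CategoryTheory.Bicategory.sum_whiskerRight {C : Type*} [Bicategory C]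
    {x y z : C} [Preadditive (x ⟶ y)] [Preadditive (x ⟶ z)] {f g : x ⟶ y} {h : y ⟶ z}
    (wr : ∀ η θ : f ⟶ g, (η + θ) ▷ h = η ▷ h + θ ▷ h)
    {J : Type*} (s : Finset J) (η : J → (f ⟶ g)) :
    (∑ i ∈ s, η i) ▷ h = ∑ i ∈ s, η i ▷ h :=
  map_sum (AddMonoidHom.mk' (fun θ => θ ▷ h) wr) η s

namespace FrobeniusDuality

variable {ι : a ⟶ b} {κ : b ⟶ a} (D : FrobeniusDuality ι κ)

lemma sL_comp (l l' : ι ⟶ ι) : D.sL (l ≫ l') = D.sL l ≫ D.sL l' :=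
  comp_whiskerRight l l' κ

lemma sL_id : D.sL (𝟙 ι) = 𝟙 (ι ≫ κ) :=
  id_whiskerRight ι κ

def insertCoevL : ι ≫ κ ⟶ ((ι ≫ κ) ≫ ι) ≫ κ :=
  (ρ_ (ι ≫ κ)).inv ≫ (ι ≫ κ) ◁ D.coevL ≫ (α_ (ι ≫ κ) ι κ).inv

def contractEvL : ((ι ≫ κ) ≫ ι) ≫ κ ⟶ ι ≫ κ :=
  (α_ (ι ≫ κ) ι κ).hom ≫ (α_ ι κ (ι ≫ κ)).hom ≫ ι ◁ (α_ κ ι κ).inv ≫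
    ι ◁ (D.evL ▷ κ) ≫ ι ◁ (λ_ κ).hom

def insertCoevR : ι ≫ κ ⟶ ((ι ≫ κ) ≫ ι) ≫ κ :=
  ι ◁ (λ_ κ).inv ≫ ι ◁ (D.coevR ▷ κ) ≫ ι ◁ (α_ κ ι κ).hom ≫
    (α_ ι κ (ι ≫ κ)).inv ≫ (α_ (ι ≫ κ) ι κ).inv

def contractEvR : ((ι ≫ κ) ≫ ι) ≫ κ ⟶ ι ≫ κ :=
  (α_ (ι ≫ κ) ι κ).hom ≫ (ι ≫ κ) ◁ D.evR ≫ (ρ_ (ι ≫ κ)).hom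

lemma insertCoevL_contractEvL : D.insertCoevL ≫ D.contractEvL = 𝟙 (ι ≫ κ) := by
  have h := congrArg (ι ◁ ·) D.zig2
  simp only [whiskerLeft_id] at h
  rw [← h, insertCoevL, contractEvL]
  bicategory

lemma insertCoevR_contractEvR : D.insertCoevR ≫ D.contractEvR = 𝟙 (ι ≫ κ) := by
  have h := congrArg (ι ◁ ·) D.zig4
  simp only [whiskerLeft_id] at h
  rw [← h, insertCoevR, contractEvR]
  bicategory

lemma insertCoevL_naturality (z : ι ≫ κ ⟶ ι ≫ κ) :
    D.insertCoevL ≫ (z ▷ ι) ▷ κ = z ≫ D.insertCoevL := by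
  rw [insertCoevL]
  simp only [Category.assoc]
  rw [← associator_inv_naturality_left]
  slice_lhs 2 3 => rw [whisker_exchange]
  simp

lemma contractEvR_naturality (z : ι ≫ κ ⟶ ι ≫ κ) :
    (z ▷ ι) ▷ κ ≫ D.contractEvR = D.contractEvR ≫ z := by
  rw [contractEvR]
  slice_lhs 1 2 => rw [associator_naturality_left]
  slice_lhs 2 3 => rw [← whisker_exchange]
  simp

lemma insertCoevL_d2comp_contractEvL (x y z : ι ≫ κ ⟶ ι ≫ κ) :
    D.insertCoevL ≫ D.d2comp x y ▷ κ ≫ (z ▷ ι) ▷ κ ≫ D.contractEvL =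
      x ≫ D.sL (D.phiL (y ≫ z)) := by
  rw [d2comp, sL]
  simp only [comp_whiskerRight, Category.assoc]
  rw [reassoc_of% (D.insertCoevL_naturality x)]
  congr 1
  have bend : D.insertCoevL ≫ (α_ ι κ ι).hom ▷ κ ≫ (ι ◁ D.evL) ▷ κ ≫ (ι ◁ D.coevR) ▷ κ ≫
      (α_ ι κ ι).inv ▷ κ ≫ (y ▷ ι) ▷ κ ≫ (z ▷ ι) ▷ κ ≫ D.contractEvL =
      ι ◁ ((ρ_ κ).inv ≫ κ ◁ D.coevL ≫ (α_ κ ι κ).inv ≫ D.evL ▷ κ ≫ (λ_ κ).hom) ≫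
        D.phiL (y ≫ z) ▷ κ := by
    rw [phiL, insertCoevL, contractEvL]
    simp only [comp_whiskerRight, Category.assoc]
    bicategory
  rw [bend, D.zig2, whiskerLeft_id, Category.id_comp]

lemma insertCoevR_d2comp_contractEvR (x y z : ι ≫ κ ⟶ ι ≫ κ) :
    D.insertCoevR ≫ (z ▷ ι) ▷ κ ≫ D.d2comp x y ▷ κ ≫ D.contractEvR =
      D.sL (D.phiL (z ≫ x)) ≫ y := by
  rw [d2comp, sL]
  simp only [comp_whiskerRight, Category.assoc]
  rw [contractEvR_naturality]
  have bend : D.insertCoevR ≫ (z ▷ ι) ▷ κ ≫ (x ▷ ι) ▷ κ ≫ (α_ ι κ ι).hom ▷ κ ≫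
      (ι ◁ D.evL) ▷ κ ≫ (ι ◁ D.coevR) ▷ κ ≫ (α_ ι κ ι).inv ▷ κ ≫ D.contractEvR =
      D.phiL (z ≫ x) ▷ κ ≫
        ι ◁ ((λ_ κ).inv ≫ D.coevR ▷ κ ≫ (α_ κ ι κ).hom ≫ κ ◁ D.evR ≫ (ρ_ κ).hom) := by
    rw [phiL, insertCoevR, contractEvR]
    simp only [comp_whiskerRight, Category.assoc]
    bicategory
  rw [reassoc_of% bend, D.zig4, whiskerLeft_id, Category.id_comp]

variable [Preadditive (a ⟶ b)] [Preadditive (a ⟶ a)]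
  (wr : ∀ η θ : (ι ≫ κ) ≫ ι ⟶ (ι ≫ κ) ≫ ι, (η + θ) ▷ κ = η ▷ κ + θ ▷ κ)
  {J : Type*} (s : Finset J) (x y : J → (ι ≫ κ ⟶ ι ≫ κ))
  (hqb : ∑ i ∈ s, D.d2comp (x i) (y i) = 𝟙 ((ι ≫ κ) ≫ ι))
include wr hqb

lemma sum_comp_sL_phiL (z : ι ≫ κ ⟶ ι ≫ κ) :
    ∑ i ∈ s, x i ≫ D.sL (D.phiL (y i ≫ z)) = z := by
  calc ∑ i ∈ s, x i ≫ D.sL (D.phiL (y i ≫ z))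
      = ∑ i ∈ s, D.insertCoevL ≫ D.d2comp (x i) (y i) ▷ κ ≫ (z ▷ ι) ▷ κ ≫ D.contractEvL :=
        Finset.sum_congr rfl fun i _ => (D.insertCoevL_d2comp_contractEvL _ _ _).symm
    _ = D.insertCoevL ≫ (∑ i ∈ s, D.d2comp (x i) (y i)) ▷ κ ≫ (z ▷ ι) ▷ κ ≫ D.contractEvL := by
        rw [sum_whiskerRight wr]
        simp only [Preadditive.comp_sum, Preadditive.sum_comp]
    _ = z := by
        rw [hqb, id_whiskerRight, Category.id_comp, reassoc_of% (D.insertCoevL_naturality z),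
          insertCoevL_contractEvL, Category.comp_id]

lemma sum_sL_phiL_comp (z : ι ≫ κ ⟶ ι ≫ κ) :
    ∑ i ∈ s, D.sL (D.phiL (z ≫ x i)) ≫ y i = z := by
  calc ∑ i ∈ s, D.sL (D.phiL (z ≫ x i)) ≫ y i
      = ∑ i ∈ s, D.insertCoevR ≫ (z ▷ ι) ▷ κ ≫ D.d2comp (x i) (y i) ▷ κ ≫ D.contractEvR :=
        Finset.sum_congr rfl fun i _ => (D.insertCoevR_d2comp_contractEvR _ _ _).symm
    _ = D.insertCoevR ≫ (z ▷ ι) ▷ κ ≫ (∑ i ∈ s, D.d2comp (x i) (y i)) ▷ κ ≫ D.contractEvR := by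
        rw [sum_whiskerRight wr]
        simp only [Preadditive.comp_sum, Preadditive.sum_comp]
    _ = z := by
        rw [hqb, id_whiskerRight, Category.id_comp, contractEvR_naturality,
          reassoc_of% D.insertCoevR_contractEvR]

end FrobeniusDuality

open FrobeniusDuality in
theorem source_map_frobenius_extension_general
    {C : Type u} [Bicategory.{w, v} C] [∀ (x y : C), Preadditive (x ⟶ y)]
    (wr : ∀ {x y z : C} {f g : x ⟶ y} (η θ : f ⟶ g) (h : y ⟶ z),
      (η + θ) ▷ h = η ▷ h + θ ▷ h)
    {a b : C} {ι : a ⟶ b} {κ : b ⟶ a} (D : FrobeniusDuality ι κ)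
    (n : ℕ) (y x : ℕ → (ι ≫ κ ⟶ ι ≫ κ))
    (hqb : ∑ i ∈ Finset.range n, D.d2comp (x i) (y i) = 𝟙 ((ι ≫ κ) ≫ ι)) :
    (∀ l l' : ι ⟶ ι, D.sL (l ≫ l') = D.sL l ≫ D.sL l') ∧
      D.sL (𝟙 ι) = 𝟙 (ι ≫ κ) ∧
      (∀ z : ι ≫ κ ⟶ ι ≫ κ,
        ∑ i ∈ Finset.range n, (x i ≫ D.sL (D.phiL (y i ≫ z))) = z) ∧
      (∀ z : ι ≫ κ ⟶ ι ≫ κ,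
        ∑ i ∈ Finset.range n, (D.sL (D.phiL (z ≫ x i)) ≫ y i) = z) :=
  ⟨D.sL_comp, D.sL_id, D.sum_comp_sL_phiL (fun η θ => wr η θ κ) _ x y hqb,
    D.sum_sL_phiL_comp (fun η θ => wr η θ κ) _ x y hqb⟩

open FrobeniusDuality in
/-- For a D2 Frobenius 1-morphism `ι` with D2 quasi-basis `∑ᵢ yᵢ ⊗ xᵢ`,
the ring homomorphism `s_L : L → A`, `l ↦ l × κ`, is a Frobenius extension: the map
`φ_L(a) = (ι × evL) ∘ (a × ι) ∘ (ι × coevR)` satisfies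
`∑ᵢ s_L(φ_L(a ∘ yᵢ)) ∘ xᵢ = a = ∑ᵢ yᵢ ∘ s_L(φ_L(xᵢ ∘ a))`.
(Vertical composition `u ∘ v` of the paper is `v ≫ u` here.) -/
theorem source_map_frobenius_extension
    {C : Type u} [Bicategory.{w, v} C] [∀ (x y : C), Preadditive (x ⟶ y)]
    (wl : ∀ {x y z : C} (f : x ⟶ y) {g h : y ⟶ z} (η θ : g ⟶ h),
      f ◁ (η + θ) = f ◁ η + f ◁ θ)
    (wr : ∀ {x y z : C} {f g : x ⟶ y} (η θ : f ⟶ g) (h : y ⟶ z),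
      (η + θ) ▷ h = η ▷ h + θ ▷ h)
    {a b : C} {ι : a ⟶ b} {κ : b ⟶ a} (D : FrobeniusDuality ι κ)
    (n : ℕ) (y x : ℕ → (ι ≫ κ ⟶ ι ≫ κ))
    (hqb : ∑ i ∈ Finset.range n, D.d2comp (x i) (y i) = 𝟙 ((ι ≫ κ) ≫ ι)) :
    (∀ l l' : ι ⟶ ι, D.sL (l ≫ l') = D.sL l ≫ D.sL l') ∧
      D.sL (𝟙 ι) = 𝟙 (ι ≫ κ) ∧
      (∀ z : ι ≫ κ ⟶ ι ≫ κ,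
        ∑ i ∈ Finset.range n, (x i ≫ D.sL (D.phiL (y i ≫ z))) = z) ∧
      (∀ z : ι ≫ κ ⟶ ι ≫ κ,
        ∑ i ∈ Finset.range n, (D.sL (D.phiL (z ≫ x i)) ≫ y i) = z) :=
  source_map_frobenius_extension_general wr D n y x hqb
end

section
/- With ι a D2 Frobenius 1-morphism and quasi-basis ∑ᵢ yᵢ ⊗ xᵢ in A^L ⊗_L {}_L A: (i) ∑ᵢ (a∘yᵢ) ⊗ xᵢ = ∑ᵢ yᵢ ⊗ (xᵢ∘a) for all a ∈ A; (ii) ∑ᵢ yᵢ ⊗ (xᵢ ∗ a) = ∑ᵢ (yᵢ ∗ S_A(a)) ⊗ xᵢ for all a ∈ A; (iii) a₁ ∗ (a₂ ∘ a₃) = ∑ᵢ ((a₁∘yᵢ) ∗ a₂) ∘ (xᵢ ∗ a₃) for all a₁, a₂, a₃ ∈ A. -/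
open CategoryTheory Bicategory

universe w v u

variable {C : Type u} [Bicategory.{w, v} C] {a b : C}

namespace FrobeniusDuality

variable {ι : a ⟶ b} {κ : b ⟶ a} (D : FrobeniusDuality ι κ)

/-- Bent unit `β : ι ⟶ (ι≫κ)≫ι` built from `coevR`. -/
def bet : ι ⟶ (ι ≫ κ) ≫ ι := (ρ_ ι).inv ≫ ι ◁ D.coevR ≫ (α_ ι κ ι).inv

/-- Bent counit `δ : (ι≫κ)≫ι ⟶ ι` built from `evL`. -/
def del : (ι ≫ κ) ≫ ι ⟶ ι := (α_ ι κ ι).hom ≫ ι ◁ D.evL ≫ (ρ_ ι).hom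

/-- The `L`-valued coefficient map. -/
def lam (u : ι ≫ κ ⟶ ι ≫ κ) : ι ⟶ ι := D.bet ≫ u ▷ ι ≫ D.del

lemma d2comp_eq (x y : ι ≫ κ ⟶ ι ≫ κ) :
    D.d2comp x y = x ▷ ι ≫ D.del ≫ D.bet ≫ y ▷ ι := by
  simp [d2comp, del, bet]

lemma sL_bet (l : ι ⟶ ι) : l ≫ D.bet = D.bet ≫ D.sL l ▷ ι := by
  calc l ≫ D.bet = (ρ_ ι).inv ≫ (l ▷ 𝟙 b ≫ ι ◁ D.coevR) ≫ (α_ ι κ ι).inv := by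
        unfold bet; bicategory
    _ = (ρ_ ι).inv ≫ (ι ◁ D.coevR ≫ l ▷ (κ ≫ ι)) ≫ (α_ ι κ ι).inv := by
        rw [← whisker_exchange]
    _ = D.bet ≫ D.sL l ▷ ι := by unfold bet sL; bicategory

lemma del_sL (l : ι ⟶ ι) : D.del ≫ l = D.sL l ▷ ι ≫ D.del := by
  calc D.del ≫ l = (α_ ι κ ι).hom ≫ (ι ◁ D.evL ≫ l ▷ 𝟙 b) ≫ (ρ_ ι).hom := by
        unfold del; bicategory
    _ = (α_ ι κ ι).hom ≫ (l ▷ (κ ≫ ι) ≫ ι ◁ D.evL) ≫ (ρ_ ι).hom := by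
        rw [whisker_exchange]
    _ = D.sL l ▷ ι ≫ D.del := by unfold del sL; bicategory

/-- Retraction for `u ↦ β ≫ u ▷ ι`. -/
def rS (t : ι ⟶ (ι ≫ κ) ≫ ι) : ι ≫ κ ⟶ ι ≫ κ :=
  t ▷ κ ≫ (α_ (ι ≫ κ) ι κ).hom ≫ (ι ≫ κ) ◁ D.evR ≫ (ρ_ (ι ≫ κ)).hom

lemma rS_bet (u : ι ≫ κ ⟶ ι ≫ κ) : D.rS (D.bet ≫ u ▷ ι) = u := by
  calc D.rS (D.bet ≫ u ▷ ι)
      = D.bet ▷ κ ≫ (α_ (ι ≫ κ) ι κ).hom ≫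
          (u ▷ (ι ≫ κ) ≫ (ι ≫ κ) ◁ D.evR) ≫ (ρ_ (ι ≫ κ)).hom := by
        unfold rS bet; bicategory
    _ = D.bet ▷ κ ≫ (α_ (ι ≫ κ) ι κ).hom ≫
          ((ι ≫ κ) ◁ D.evR ≫ u ▷ 𝟙 a) ≫ (ρ_ (ι ≫ κ)).hom := by
        rw [← whisker_exchange]
    _ = ι ◁ ((λ_ κ).inv ≫ D.coevR ▷ κ ≫ (α_ κ ι κ).hom ≫ κ ◁ D.evR ≫ (ρ_ κ).hom) ≫ u := by
        unfold bet; bicategory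
    _ = u := by rw [D.zig4]; simp

/-- Retraction for `u ↦ u ▷ ι ≫ δ`. -/
def rF (t : (ι ≫ κ) ≫ ι ⟶ ι) : ι ≫ κ ⟶ ι ≫ κ :=
  (ρ_ (ι ≫ κ)).inv ≫ (ι ≫ κ) ◁ D.coevL ≫ (α_ (ι ≫ κ) ι κ).inv ≫ t ▷ κ

lemma rF_del (u : ι ≫ κ ⟶ ι ≫ κ) : D.rF (u ▷ ι ≫ D.del) = u := by
  calc D.rF (u ▷ ι ≫ D.del)
      = (ρ_ (ι ≫ κ)).inv ≫ ((ι ≫ κ) ◁ D.coevL ≫ u ▷ (ι ≫ κ)) ≫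
          (α_ (ι ≫ κ) ι κ).inv ≫ D.del ▷ κ := by
        unfold rF; bicategory
    _ = (ρ_ (ι ≫ κ)).inv ≫ (u ▷ 𝟙 a ≫ (ι ≫ κ) ◁ D.coevL) ≫
          (α_ (ι ≫ κ) ι κ).inv ≫ D.del ▷ κ := by
        rw [whisker_exchange]
    _ = u ≫ ι ◁ ((ρ_ κ).inv ≫ κ ◁ D.coevL ≫ (α_ κ ι κ).inv ≫ D.evL ▷ κ ≫ (λ_ κ).hom) := by
        unfold del; bicategory
    _ = u := by rw [D.zig2]; simp

end FrobeniusDuality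
namespace FrobeniusDuality

variable {ι : a ⟶ b} {κ : b ⟶ a} (D : FrobeniusDuality ι κ)

/-- Reduced form of `conv y (FdotInv w)`. -/
def Rr (y : ι ≫ κ ⟶ ι ≫ κ) (w : κ ≫ ι ⟶ κ ≫ ι) : ι ≫ κ ⟶ ι ≫ κ :=
  ι ◁ (λ_ κ).inv ≫ ι ◁ (D.coevR ▷ κ) ≫ ι ◁ (α_ κ ι κ).hom ≫ (α_ ι κ (ι ≫ κ)).inv ≫
    y ▷ (ι ≫ κ) ≫ (α_ ι κ (ι ≫ κ)).hom ≫
    ι ◁ ((α_ κ ι κ).inv ≫ w ▷ κ ≫ (α_ κ ι κ).hom ≫ κ ◁ D.evR ≫ (ρ_ κ).hom)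

/-- Common reduced form for the antipode computation. -/
def Tt (x y : ι ≫ κ ⟶ ι ≫ κ) (w : κ ≫ ι ⟶ κ ≫ ι) : ι ⟶ ι :=
  D.bet ≫ y ▷ ι ≫ (α_ ι κ ι).hom ≫ ι ◁ w ≫ (α_ ι κ ι).inv ≫ x ▷ ι ≫ D.del

lemma conv_FdotInv (y : ι ≫ κ ⟶ ι ≫ κ) (w : κ ≫ ι ⟶ κ ≫ ι) :
    D.conv y (D.FdotInv w) = D.Rr y w := by
  calc D.conv y (D.FdotInv w)
      = (ι ◁ (λ_ κ).inv ≫ ι ◁ (D.coevR ▷ κ) ≫ ι ◁ (α_ κ ι κ).hom ≫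
          (α_ ι κ (ι ≫ κ)).inv ≫ y ▷ (ι ≫ κ) ≫ (ι ≫ κ) ◁ (λ_ (ι ≫ κ)).inv ≫
          (ι ≫ κ) ◁ (D.coevL ▷ (ι ≫ κ)) ≫ (ι ≫ κ) ◁ (α_ ι κ (ι ≫ κ)).hom ≫
          (α_ (ι ≫ κ) ι (κ ≫ (ι ≫ κ))).inv ≫ (α_ ι κ ι).hom ▷ (κ ≫ (ι ≫ κ))) ≫
          ((ι ≫ (κ ≫ ι)) ◁ ((α_ κ ι κ).inv ≫ w ▷ κ ≫ (α_ κ ι κ).hom ≫ κ ◁ D.evR ≫ (ρ_ κ).hom) ≫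
            (ι ◁ D.evL ≫ (ρ_ ι).hom) ▷ κ) := by
        unfold conv FdotInv; bicategory
    _ = (ι ◁ (λ_ κ).inv ≫ ι ◁ (D.coevR ▷ κ) ≫ ι ◁ (α_ κ ι κ).hom ≫
          (α_ ι κ (ι ≫ κ)).inv ≫ y ▷ (ι ≫ κ) ≫ (ι ≫ κ) ◁ (λ_ (ι ≫ κ)).inv ≫
          (ι ≫ κ) ◁ (D.coevL ▷ (ι ≫ κ)) ≫ (ι ≫ κ) ◁ (α_ ι κ (ι ≫ κ)).hom ≫
          (α_ (ι ≫ κ) ι (κ ≫ (ι ≫ κ))).inv ≫ (α_ ι κ ι).hom ▷ (κ ≫ (ι ≫ κ))) ≫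
          ((ι ◁ D.evL ≫ (ρ_ ι).hom) ▷ (κ ≫ (ι ≫ κ)) ≫
            ι ◁ ((α_ κ ι κ).inv ≫ w ▷ κ ≫ (α_ κ ι κ).hom ≫ κ ◁ D.evR ≫ (ρ_ κ).hom)) := by
        rw [whisker_exchange]
    _ = (ι ◁ (λ_ κ).inv ≫ ι ◁ (D.coevR ▷ κ) ≫ ι ◁ (α_ κ ι κ).hom ≫
          (α_ ι κ (ι ≫ κ)).inv ≫ y ▷ (ι ≫ κ)) ≫
          (ι ◁ ((ρ_ κ).inv ≫ κ ◁ D.coevL ≫ (α_ κ ι κ).inv ≫ D.evL ▷ κ ≫ (λ_ κ).hom)) ▷ (ι ≫ κ) ≫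
          ((α_ ι κ (ι ≫ κ)).hom ≫
            ι ◁ ((α_ κ ι κ).inv ≫ w ▷ κ ≫ (α_ κ ι κ).hom ≫ κ ◁ D.evR ≫ (ρ_ κ).hom)) := by
        bicategory
    _ = D.Rr y w := by rw [D.zig2]; simp [Rr]

lemma lam_Rr (x y : ι ≫ κ ⟶ ι ≫ κ) (w : κ ≫ ι ⟶ κ ≫ ι) :
    D.lam (D.Rr y w ≫ x) = D.Tt x y w := by
  calc D.lam (D.Rr y w ≫ x)
      = (ρ_ ι).inv ≫
          (ι ◁ D.coevR ≫
            (D.bet ≫ y ▷ ι ≫ (α_ ι κ ι).hom ≫ ι ◁ w ≫ (α_ ι κ ι).inv) ▷ (κ ≫ ι)) ≫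
          (α_ (ι ≫ κ) ι (κ ≫ ι)).hom ≫
          (ι ≫ κ) ◁ ((α_ ι κ ι).inv ≫ D.evR ▷ ι ≫ (λ_ ι).hom) ≫ x ▷ ι ≫ D.del := by
        unfold lam Rr bet del; bicategory
    _ = (ρ_ ι).inv ≫
          ((D.bet ≫ y ▷ ι ≫ (α_ ι κ ι).hom ≫ ι ◁ w ≫ (α_ ι κ ι).inv) ▷ 𝟙 b ≫
            ((ι ≫ κ) ≫ ι) ◁ D.coevR) ≫
          (α_ (ι ≫ κ) ι (κ ≫ ι)).hom ≫
          (ι ≫ κ) ◁ ((α_ ι κ ι).inv ≫ D.evR ▷ ι ≫ (λ_ ι).hom) ≫ x ▷ ι ≫ D.del := by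
        rw [whisker_exchange]
    _ = (D.bet ≫ y ▷ ι ≫ (α_ ι κ ι).hom ≫ ι ◁ w ≫ (α_ ι κ ι).inv) ≫
          ((ι ≫ κ) ◁ ((ρ_ ι).inv ≫ ι ◁ D.coevR ≫ (α_ ι κ ι).inv ≫ D.evR ▷ ι ≫ (λ_ ι).hom)) ≫
          x ▷ ι ≫ D.del := by
        unfold bet; bicategory
    _ = D.Tt x y w := by rw [D.zig3]; simp [Tt]

lemma lam_conv (x y z : ι ≫ κ ⟶ ι ≫ κ) :
    D.lam (y ≫ D.conv x z) = D.Tt x y (D.Ftr z) := by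
  calc D.lam (y ≫ D.conv x z)
      = ((ρ_ ι).inv ≫ ι ◁ D.coevR ≫ (α_ ι κ ι).inv ≫ y ▷ ι ≫ (α_ ι κ ι).hom ≫
          ι ◁ ((λ_ (κ ≫ ι)).inv ≫ D.coevR ▷ (κ ≫ ι)) ≫
          ι ◁ (α_ κ ι (κ ≫ ι)).hom ≫ (α_ ι κ (ι ≫ (κ ≫ ι))).inv ≫
          x ▷ (ι ≫ (κ ≫ ι)) ≫ (ι ≫ κ) ◁ (α_ ι κ ι).inv ≫ (ι ≫ κ) ◁ (z ▷ ι) ≫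
          (ι ≫ κ) ◁ (α_ ι κ ι).hom ≫ (α_ ι κ (ι ≫ (κ ≫ ι))).hom ≫
          ι ◁ (α_ κ ι (κ ≫ ι)).inv ≫ (α_ ι (κ ≫ ι) (κ ≫ ι)).inv) ≫
          ((ι ◁ D.evL ≫ (ρ_ ι).hom) ▷ (κ ≫ ι) ≫ ι ◁ D.evL) ≫ (ρ_ ι).hom := by
        unfold lam conv bet del; bicategory
    _ = ((ρ_ ι).inv ≫ ι ◁ D.coevR ≫ (α_ ι κ ι).inv ≫ y ▷ ι ≫ (α_ ι κ ι).hom ≫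
          ι ◁ ((λ_ (κ ≫ ι)).inv ≫ D.coevR ▷ (κ ≫ ι)) ≫
          ι ◁ (α_ κ ι (κ ≫ ι)).hom ≫ (α_ ι κ (ι ≫ (κ ≫ ι))).inv ≫
          x ▷ (ι ≫ (κ ≫ ι)) ≫ (ι ≫ κ) ◁ (α_ ι κ ι).inv ≫ (ι ≫ κ) ◁ (z ▷ ι) ≫
          (ι ≫ κ) ◁ (α_ ι κ ι).hom ≫ (α_ ι κ (ι ≫ (κ ≫ ι))).hom ≫
          ι ◁ (α_ κ ι (κ ≫ ι)).inv ≫ (α_ ι (κ ≫ ι) (κ ≫ ι)).inv) ≫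
          ((ι ≫ (κ ≫ ι)) ◁ D.evL ≫ (ι ◁ D.evL ≫ (ρ_ ι).hom) ▷ 𝟙 b) ≫ (ρ_ ι).hom := by
        rw [← whisker_exchange (ι ◁ D.evL ≫ (ρ_ ι).hom) D.evL]
    _ = ((ρ_ ι).inv ≫ ι ◁ D.coevR ≫ (α_ ι κ ι).inv ≫ y ▷ ι ≫ (α_ ι κ ι).hom ≫
          ι ◁ ((λ_ (κ ≫ ι)).inv ≫ D.coevR ▷ (κ ≫ ι)) ≫
          ι ◁ (α_ κ ι (κ ≫ ι)).hom ≫ (α_ ι κ (ι ≫ (κ ≫ ι))).inv) ≫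
          (x ▷ (ι ≫ (κ ≫ ι)) ≫
            (ι ≫ κ) ◁ ((α_ ι κ ι).inv ≫ z ▷ ι ≫ (α_ ι κ ι).hom ≫ ι ◁ D.evL ≫ (ρ_ ι).hom)) ≫
          ((α_ ι κ ι).hom ≫ ι ◁ D.evL ≫ (ρ_ ι).hom) := by
        bicategory
    _ = ((ρ_ ι).inv ≫ ι ◁ D.coevR ≫ (α_ ι κ ι).inv ≫ y ▷ ι ≫ (α_ ι κ ι).hom ≫
          ι ◁ ((λ_ (κ ≫ ι)).inv ≫ D.coevR ▷ (κ ≫ ι)) ≫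
          ι ◁ (α_ κ ι (κ ≫ ι)).hom ≫ (α_ ι κ (ι ≫ (κ ≫ ι))).inv) ≫
          ((ι ≫ κ) ◁ ((α_ ι κ ι).inv ≫ z ▷ ι ≫ (α_ ι κ ι).hom ≫ ι ◁ D.evL ≫ (ρ_ ι).hom) ≫
            x ▷ ι) ≫
          ((α_ ι κ ι).hom ≫ ι ◁ D.evL ≫ (ρ_ ι).hom) := by
        rw [← whisker_exchange x
          ((α_ ι κ ι).inv ≫ z ▷ ι ≫ (α_ ι κ ι).hom ≫ ι ◁ D.evL ≫ (ρ_ ι).hom)]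
    _ = D.Tt x y (D.Ftr z) := by unfold Tt Ftr bet del; bicategory

/-- The key antipode identity for the quasi-basis. -/
lemma lam_key (x y z : ι ≫ κ ⟶ ι ≫ κ) :
    D.lam (y ≫ D.conv x z) = D.lam (D.conv y (D.SA z) ≫ x) := by
  rw [lam_conv, SA, conv_FdotInv, lam_Rr]

end FrobeniusDuality
namespace FrobeniusDuality

variable {ι : a ⟶ b} {κ : b ⟶ a} (D : FrobeniusDuality ι κ)

/-- Prefix of the quasi-basis convolution identity. -/
def preIII (a₃ : ι ≫ κ ⟶ ι ≫ κ) : ι ≫ κ ⟶ ((ι ≫ κ) ≫ ι) ≫ κ :=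
  ι ◁ ((λ_ κ).inv ≫ D.coevR ▷ κ ≫ (α_ κ ι κ).hom ≫ κ ◁ a₃) ≫
    (α_ ι κ (ι ≫ κ)).inv ≫ (α_ (ι ≫ κ) ι κ).inv

/-- Postfix of the quasi-basis convolution identity. -/
def postIII (a₁ a₂ : ι ≫ κ ⟶ ι ≫ κ) : ((ι ≫ κ) ≫ ι) ≫ κ ⟶ ι ≫ κ :=
  (a₁ ▷ ι) ▷ κ ≫ (α_ (ι ≫ κ) ι κ).hom ≫ (ι ≫ κ) ◁ a₂ ≫ (α_ ι κ (ι ≫ κ)).hom ≫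
    ι ◁ ((α_ κ ι κ).inv ≫ D.evL ▷ κ ≫ (λ_ κ).hom)

lemma conv_conv (a₁ a₂ a₃ x y : ι ≫ κ ⟶ ι ≫ κ) :
    D.conv x a₃ ≫ D.conv (y ≫ a₁) a₂ =
      D.preIII a₃ ≫ D.d2comp x y ▷ κ ≫ D.postIII a₁ a₂ := by
  unfold conv d2comp preIII postIII
  rw [← whisker_exchange_assoc x a₃]
  bicategory

lemma conv_id (a₁ a₂ a₃ : ι ≫ κ ⟶ ι ≫ κ) :
    D.preIII a₃ ≫ 𝟙 ((ι ≫ κ) ≫ ι) ▷ κ ≫ D.postIII a₁ a₂ = D.conv a₁ (a₃ ≫ a₂) := by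
  unfold conv preIII postIII
  rw [Bicategory.whiskerLeft_comp (ι ≫ κ) a₃ a₂]
  simp only [Category.assoc]
  rw [← whisker_exchange_assoc a₁ a₃]
  bicategory

section Additive

variable [∀ (x y : C), Preadditive (x ⟶ y)]

lemma whiskerRight_sum
    (wr : ∀ {x y z : C} {f g : x ⟶ y} (η θ : f ⟶ g) (h : y ⟶ z),
      (η + θ) ▷ h = η ▷ h + θ ▷ h)
    {x y z : C} {f g : x ⟶ y} (h : y ⟶ z) (s : Finset ℕ) (t : ℕ → (f ⟶ g)) :
    (∑ i ∈ s, t i) ▷ h = ∑ i ∈ s, t i ▷ h := by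
  classical
  have h0 : (0 : f ⟶ g) ▷ h = 0 := by
    have h' := wr (0 : f ⟶ g) 0 h
    rw [add_zero] at h'
    exact (left_eq_add.mp h')
  induction s using Finset.induction with
  | empty => simpa using h0
  | insert _ _ hx ih => rw [Finset.sum_insert hx, Finset.sum_insert hx, wr, ih]

lemma rS_sum
    (wr : ∀ {x y z : C} {f g : x ⟶ y} (η θ : f ⟶ g) (h : y ⟶ z),
      (η + θ) ▷ h = η ▷ h + θ ▷ h)
    (s : Finset ℕ) (t : ℕ → (ι ⟶ (ι ≫ κ) ≫ ι)) :
    D.rS (∑ i ∈ s, t i) = ∑ i ∈ s, D.rS (t i) := by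
  unfold rS
  rw [whiskerRight_sum wr, Preadditive.sum_comp]

lemma rF_sum
    (wr : ∀ {x y z : C} {f g : x ⟶ y} (η θ : f ⟶ g) (h : y ⟶ z),
      (η + θ) ▷ h = η ▷ h + θ ▷ h)
    (s : Finset ℕ) (t : ℕ → ((ι ≫ κ) ≫ ι ⟶ ι)) :
    D.rF (∑ i ∈ s, t i) = ∑ i ∈ s, D.rF (t i) := by
  unfold rF
  rw [whiskerRight_sum wr, Preadditive.comp_sum]
  simp only [Preadditive.comp_sum, Preadditive.sum_comp]

lemma reconstr_left
    (wr : ∀ {x y z : C} {f g : x ⟶ y} (η θ : f ⟶ g) (h : y ⟶ z),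
      (η + θ) ▷ h = η ▷ h + θ ▷ h)
    (n : ℕ) (y x : ℕ → (ι ≫ κ ⟶ ι ≫ κ))
    (hqb : ∑ i ∈ Finset.range n, D.d2comp (x i) (y i) = 𝟙 ((ι ≫ κ) ≫ ι))
    (u : ι ≫ κ ⟶ ι ≫ κ) :
    ∑ i ∈ Finset.range n, D.sL (D.lam (u ≫ x i)) ≫ y i = u := by
  have h1 : D.bet ≫ u ▷ ι =
      ∑ i ∈ Finset.range n, D.bet ≫ (D.sL (D.lam (u ≫ x i)) ≫ y i) ▷ ι := by
    conv_lhs => rw [← Category.comp_id (D.bet ≫ u ▷ ι), Category.assoc, ← hqb]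
    simp only [Preadditive.comp_sum]
    refine Finset.sum_congr rfl fun i _ => ?_
    rw [D.d2comp_eq]
    calc D.bet ≫ u ▷ ι ≫ (x i ▷ ι ≫ D.del ≫ D.bet ≫ y i ▷ ι)
        = D.lam (u ≫ x i) ≫ D.bet ≫ y i ▷ ι := by
          unfold lam; simp [comp_whiskerRight]
      _ = D.bet ≫ D.sL (D.lam (u ≫ x i)) ▷ ι ≫ y i ▷ ι := by
          rw [← Category.assoc, D.sL_bet, Category.assoc]
      _ = D.bet ≫ (D.sL (D.lam (u ≫ x i)) ≫ y i) ▷ ι := by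
          rw [comp_whiskerRight]
  calc ∑ i ∈ Finset.range n, D.sL (D.lam (u ≫ x i)) ≫ y i
      = ∑ i ∈ Finset.range n, D.rS (D.bet ≫ (D.sL (D.lam (u ≫ x i)) ≫ y i) ▷ ι) := by
        refine Finset.sum_congr rfl fun i _ => (D.rS_bet _).symm
    _ = D.rS (∑ i ∈ Finset.range n, D.bet ≫ (D.sL (D.lam (u ≫ x i)) ≫ y i) ▷ ι) :=
        (D.rS_sum wr _ _).symm
    _ = D.rS (D.bet ≫ u ▷ ι) := by rw [← h1]
    _ = u := D.rS_bet u

lemma reconstr_right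
    (wr : ∀ {x y z : C} {f g : x ⟶ y} (η θ : f ⟶ g) (h : y ⟶ z),
      (η + θ) ▷ h = η ▷ h + θ ▷ h)
    (n : ℕ) (y x : ℕ → (ι ≫ κ ⟶ ι ≫ κ))
    (hqb : ∑ i ∈ Finset.range n, D.d2comp (x i) (y i) = 𝟙 ((ι ≫ κ) ≫ ι))
    (u : ι ≫ κ ⟶ ι ≫ κ) :
    ∑ i ∈ Finset.range n, x i ≫ D.sL (D.lam (y i ≫ u)) = u := by
  have h1 : u ▷ ι ≫ D.del =
      ∑ i ∈ Finset.range n, (x i ≫ D.sL (D.lam (y i ≫ u))) ▷ ι ≫ D.del := by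
    conv_lhs => rw [← Category.id_comp (u ▷ ι ≫ D.del), ← hqb]
    simp only [Preadditive.sum_comp]
    refine Finset.sum_congr rfl fun i _ => ?_
    rw [D.d2comp_eq]
    calc (x i ▷ ι ≫ D.del ≫ D.bet ≫ y i ▷ ι) ≫ u ▷ ι ≫ D.del
        = x i ▷ ι ≫ D.del ≫ D.lam (y i ≫ u) := by
          unfold lam; simp [comp_whiskerRight]
      _ = x i ▷ ι ≫ D.sL (D.lam (y i ≫ u)) ▷ ι ≫ D.del := by
          rw [D.del_sL]
      _ = (x i ≫ D.sL (D.lam (y i ≫ u))) ▷ ι ≫ D.del := by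
          rw [comp_whiskerRight, Category.assoc]
  calc ∑ i ∈ Finset.range n, x i ≫ D.sL (D.lam (y i ≫ u))
      = ∑ i ∈ Finset.range n, D.rF ((x i ≫ D.sL (D.lam (y i ≫ u))) ▷ ι ≫ D.del) := by
        refine Finset.sum_congr rfl fun i _ => (D.rF_del _).symm
    _ = D.rF (∑ i ∈ Finset.range n, (x i ≫ D.sL (D.lam (y i ≫ u))) ▷ ι ≫ D.del) :=
        (D.rF_sum wr _ _).symm
    _ = D.rF (u ▷ ι ≫ D.del) := by rw [← h1]
    _ = u := D.rF_del u

end Additive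

end FrobeniusDuality


open FrobeniusDuality in
/-- Properties of the D2 quasi-basis `∑ᵢ yᵢ ⊗ xᵢ ∈ A^L ⊗_L {}_L A`:
(i) `∑ᵢ (a∘yᵢ) ⊗ xᵢ = ∑ᵢ yᵢ ⊗ (xᵢ∘a)`; (ii) `∑ᵢ yᵢ ⊗ (xᵢ ∗ a) = ∑ᵢ (yᵢ ∗ S_A(a)) ⊗ xᵢ`;
(iii) `a₁ ∗ (a₂ ∘ a₃) = ∑ᵢ ((a₁∘yᵢ) ∗ a₂) ∘ (xᵢ ∗ a₃)`.
Equality in the tensor product over `L` is expressed by evaluation against all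
`L`-balanced biadditive maps, the `L`-actions being `a·l = a∘(l×κ)` and `l·a = (l×κ)∘a`.
(Vertical composition `u ∘ v` of the paper is `v ≫ u` here.) -/
theorem quasi_basis_properties
    {C : Type u} [Bicategory.{w, v} C] [∀ (x y : C), Preadditive (x ⟶ y)]
    (wl : ∀ {x y z : C} (f : x ⟶ y) {g h : y ⟶ z} (η θ : g ⟶ h),
      f ◁ (η + θ) = f ◁ η + f ◁ θ)
    (wr : ∀ {x y z : C} {f g : x ⟶ y} (η θ : f ⟶ g) (h : y ⟶ z),
      (η + θ) ▷ h = η ▷ h + θ ▷ h)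
    {a b : C} {ι : a ⟶ b} {κ : b ⟶ a} (D : FrobeniusDuality ι κ)
    (n : ℕ) (y x : ℕ → (ι ≫ κ ⟶ ι ≫ κ))
    (hqb : ∑ i ∈ Finset.range n, D.d2comp (x i) (y i) = 𝟙 ((ι ≫ κ) ≫ ι)) :
    (∀ (M : Type w) (_ : AddCommGroup M) (f : (ι ≫ κ ⟶ ι ≫ κ) → (ι ≫ κ ⟶ ι ≫ κ) → M),
      (∀ u u' v, f (u + u') v = f u v + f u' v) →
      (∀ u v v', f u (v + v') = f u v + f u v') →
      (∀ (l : ι ⟶ ι) u v, f (D.sL l ≫ u) v = f u (v ≫ D.sL l)) →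
      (∀ z, ∑ i ∈ Finset.range n, f (y i ≫ z) (x i) =
        ∑ i ∈ Finset.range n, f (y i) (z ≫ x i)) ∧
      (∀ z, ∑ i ∈ Finset.range n, f (y i) (D.conv (x i) z) =
        ∑ i ∈ Finset.range n, f (D.conv (y i) (D.SA z)) (x i))) ∧
    (∀ a₁ a₂ a₃ : ι ≫ κ ⟶ ι ≫ κ,
      D.conv a₁ (a₃ ≫ a₂) =
        ∑ i ∈ Finset.range n, (D.conv (x i) a₃ ≫ D.conv (y i ≫ a₁) a₂)) := by

  classical
  constructor
  · intro M instM f hf1 hf2 hbal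
    have hf0l : ∀ v, f 0 v = 0 := by
      intro v
      have h' := hf1 0 0 v
      rw [add_zero] at h'
      exact left_eq_add.mp h'
    have hf0r : ∀ u, f u 0 = 0 := by
      intro u
      have h' := hf2 u 0 0
      rw [add_zero] at h'
      exact left_eq_add.mp h'
    have hfsuml : ∀ (s : Finset ℕ) (g : ℕ → (ι ≫ κ ⟶ ι ≫ κ)) (v : ι ≫ κ ⟶ ι ≫ κ),
        f (∑ i ∈ s, g i) v = ∑ i ∈ s, f (g i) v := by
      intro s g v
      induction s using Finset.induction with
      | empty => simpa using hf0l v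
      | insert _ _ hx ih => rw [Finset.sum_insert hx, Finset.sum_insert hx, hf1, ih]
    have hfsumr : ∀ (u : ι ≫ κ ⟶ ι ≫ κ) (s : Finset ℕ) (g : ℕ → (ι ≫ κ ⟶ ι ≫ κ)),
        f u (∑ i ∈ s, g i) = ∑ i ∈ s, f u (g i) := by
      intro u s g
      induction s using Finset.induction with
      | empty => simpa using hf0r u
      | insert _ _ hx ih => rw [Finset.sum_insert hx, Finset.sum_insert hx, hf2, ih]
    constructor
    · intro z
      calc ∑ i ∈ Finset.range n, f (y i ≫ z) (x i)
          = ∑ i ∈ Finset.range n,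
              f (∑ j ∈ Finset.range n, D.sL (D.lam ((y i ≫ z) ≫ x j)) ≫ y j) (x i) := by
            refine Finset.sum_congr rfl fun i _ => ?_
            exact congrArg (fun u => f u (x i))
              (D.reconstr_left wr n y x hqb (y i ≫ z)).symm
        _ = ∑ i ∈ Finset.range n, ∑ j ∈ Finset.range n,
              f (D.sL (D.lam ((y i ≫ z) ≫ x j)) ≫ y j) (x i) := by
            exact Finset.sum_congr rfl fun i _ => hfsuml _ _ _
        _ = ∑ i ∈ Finset.range n, ∑ j ∈ Finset.range n,
              f (y j) (x i ≫ D.sL (D.lam ((y i ≫ z) ≫ x j))) := by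
            exact Finset.sum_congr rfl fun i _ => Finset.sum_congr rfl fun j _ =>
              hbal _ _ _
        _ = ∑ j ∈ Finset.range n, ∑ i ∈ Finset.range n,
              f (y j) (x i ≫ D.sL (D.lam (y i ≫ (z ≫ x j)))) := by
            rw [Finset.sum_comm]
            simp only [Category.assoc]
        _ = ∑ j ∈ Finset.range n,
              f (y j) (∑ i ∈ Finset.range n, x i ≫ D.sL (D.lam (y i ≫ (z ≫ x j)))) := by
            exact Finset.sum_congr rfl fun j _ => (hfsumr _ _ _).symm
        _ = ∑ j ∈ Finset.range n, f (y j) (z ≫ x j) := by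
            refine Finset.sum_congr rfl fun j _ => ?_
            exact congrArg (f (y j)) (D.reconstr_right wr n y x hqb (z ≫ x j))
    · intro z
      calc ∑ i ∈ Finset.range n, f (y i) (D.conv (x i) z)
          = ∑ i ∈ Finset.range n,
              f (y i) (∑ j ∈ Finset.range n,
                x j ≫ D.sL (D.lam (y j ≫ D.conv (x i) z))) := by
            refine Finset.sum_congr rfl fun i _ => ?_
            exact congrArg (f (y i))
              (D.reconstr_right wr n y x hqb (D.conv (x i) z)).symm
        _ = ∑ i ∈ Finset.range n, ∑ j ∈ Finset.range n,
              f (y i) (x j ≫ D.sL (D.lam (y j ≫ D.conv (x i) z))) := by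
            exact Finset.sum_congr rfl fun i _ => hfsumr _ _ _
        _ = ∑ i ∈ Finset.range n, ∑ j ∈ Finset.range n,
              f (D.sL (D.lam (y j ≫ D.conv (x i) z)) ≫ y i) (x j) := by
            exact Finset.sum_congr rfl fun i _ => Finset.sum_congr rfl fun j _ =>
              (hbal _ _ _).symm
        _ = ∑ j ∈ Finset.range n, ∑ i ∈ Finset.range n,
              f (D.sL (D.lam (D.conv (y j) (D.SA z) ≫ x i)) ≫ y i) (x j) := by
            rw [Finset.sum_comm]
            simp only [D.lam_key]
        _ = ∑ j ∈ Finset.range n,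
              f (∑ i ∈ Finset.range n,
                D.sL (D.lam (D.conv (y j) (D.SA z) ≫ x i)) ≫ y i) (x j) := by
            exact Finset.sum_congr rfl fun j _ => (hfsuml _ _ _).symm
        _ = ∑ j ∈ Finset.range n, f (D.conv (y j) (D.SA z)) (x j) := by
            refine Finset.sum_congr rfl fun j _ => ?_
            exact congrArg (fun u => f u (x j))
              (D.reconstr_left wr n y x hqb (D.conv (y j) (D.SA z)))
  · intro a₁ a₂ a₃
    calc D.conv a₁ (a₃ ≫ a₂)
        = D.preIII a₃ ≫ 𝟙 ((ι ≫ κ) ≫ ι) ▷ κ ≫ D.postIII a₁ a₂ :=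
          (D.conv_id a₁ a₂ a₃).symm
      _ = D.preIII a₃ ≫
            (∑ i ∈ Finset.range n, D.d2comp (x i) (y i)) ▷ κ ≫ D.postIII a₁ a₂ := by
          rw [hqb]
      _ = ∑ i ∈ Finset.range n,
            D.preIII a₃ ≫ D.d2comp (x i) (y i) ▷ κ ≫ D.postIII a₁ a₂ := by
          rw [whiskerRight_sum wr]
          simp only [Preadditive.sum_comp, Preadditive.comp_sum]
      _ = ∑ i ∈ Finset.range n, (D.conv (x i) a₃ ≫ D.conv (y i ≫ a₁) a₂) := by
          exact Finset.sum_congr rfl fun i _ => (D.conv_conv a₁ a₂ a₃ (x i) (y i)).symm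
end

section
/- In the Hopf algebroid A = C²(ι×ῑ,ι×ῑ) of a D2 Frobenius 1-morphism ι, with i_A = coev_L ∘ ev_R: (i) (a∘i_A) ∗ 1_A = s_L(π_L(a)); (ii) 1_A ∗ (a∘i_A) = t_L(π_L(a)); (iii) 1_A ∗ (i_A∘a) = s_R(π_R(a)); (iv) (i_A∘a) ∗ 1_A = t_R(π_R(a)), for all a ∈ A. -/
/-!
Convolving with the identity on one side collapses the convolution to a partial trace:
`x ∗ 1 = φ_L(x) × κ` and `1 ∗ y = ι × φ_R(y)`, where `φ_R` closes the `ι`-leg instead of the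
`κ`-leg. When the argument has the form `a ∘ i_A` or `i_A ∘ a`, the factor
`i_A = coev_L ∘ ev_R` lets a snake identity straighten the closed loop, which gives
`φ_R(a ∘ i_A) = μ(φ_L(a ∘ i_A))` and `φ_R(i_A ∘ a) = ν(φ_L(i_A ∘ a))`. Under `φ_L(- ∘ i_A)`
the inverse antipode `S_A⁻¹ = F⁻¹ Ḟ` cancels by two more snake identities, so
`π_R(a) = ν(φ_L(i_A ∘ a))`. Finally `ν` has an explicit left inverse, so `ν⁻¹ ν = id`.
-/

open CategoryTheory Bicategory

universe w v u

variable {C : Type u} [Bicategory.{w, v} C] {a b : C}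

namespace FrobeniusDuality

variable {ι : a ⟶ b} {κ : b ⟶ a} (D : FrobeniusDuality ι κ)

-- `phiR` closes the `ι`-leg of a 2-cell of `ι ≫ κ` with `coevR`/`evL`, as `phiL` closes its
-- `κ`-leg; `phiB` closes the `κ`-leg of a 2-cell of `κ ≫ ι` with `coevL`/`evR`.
def phiR (y : ι ≫ κ ⟶ ι ≫ κ) : κ ⟶ κ :=
  (λ_ κ).inv ≫ D.coevR ▷ κ ≫ (α_ κ ι κ).hom ≫ κ ◁ y ≫ (α_ κ ι κ).inv ≫
    D.evL ▷ κ ≫ (λ_ κ).hom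

def phiB (y : κ ≫ ι ⟶ κ ≫ ι) : ι ⟶ ι :=
  (λ_ ι).inv ≫ D.coevL ▷ ι ≫ (α_ ι κ ι).hom ≫ ι ◁ y ≫ (α_ ι κ ι).inv ≫
    D.evR ▷ ι ≫ (λ_ ι).hom

lemma zig1' : D.coevL ▷ ι ≫ (α_ ι κ ι).hom ≫ ι ◁ D.evL ≫ (ρ_ ι).hom = (λ_ ι).hom := by
  rw [← cancel_epi (λ_ ι).inv]; simpa using D.zig1

lemma zig2' : κ ◁ D.coevL ≫ (α_ κ ι κ).inv ≫ D.evL ▷ κ ≫ (λ_ κ).hom = (ρ_ κ).hom := by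
  rw [← cancel_epi (ρ_ κ).inv]; simpa using D.zig2

lemma zig3' : (ρ_ ι).inv ≫ ι ◁ D.coevR ≫ (α_ ι κ ι).inv ≫ D.evR ▷ ι = (λ_ ι).inv := by
  rw [← cancel_mono (λ_ ι).hom]; simpa using D.zig3

lemma zig4' : (λ_ κ).inv ≫ D.coevR ▷ κ ≫ (α_ κ ι κ).hom ≫ κ ◁ D.evR = (ρ_ κ).inv := by
  rw [← cancel_mono (ρ_ κ).hom]; simpa using D.zig4

lemma conv_id_right (x : ι ≫ κ ⟶ ι ≫ κ) : D.conv x (𝟙 (ι ≫ κ)) = D.phiL x ▷ κ := by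
  simp only [conv, phiL, Bicategory.whiskerLeft_id, Category.id_comp]
  bicategory

lemma conv_id_left (y : ι ≫ κ ⟶ ι ≫ κ) : D.conv (𝟙 (ι ≫ κ)) y = ι ◁ D.phiR y := by
  simp only [conv, phiR, Bicategory.id_whiskerRight, Category.id_comp]
  bicategory

lemma phiL_iA_comp (z : ι ≫ κ ⟶ ι ≫ κ) :
    D.phiL (D.iA ≫ z) =
      (λ_ ι).inv ≫ D.coevL ▷ ι ≫ z ▷ ι ≫ (α_ ι κ ι).hom ≫ ι ◁ D.evL ≫ (ρ_ ι).hom := by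
  simp only [phiL, iA, comp_whiskerRight, Category.assoc]
  rw [reassoc_of% D.zig3']

lemma phiL_comp_iA (z : ι ≫ κ ⟶ ι ≫ κ) :
    D.phiL (z ≫ D.iA) =
      (ρ_ ι).inv ≫ ι ◁ D.coevR ≫ (α_ ι κ ι).inv ≫ z ▷ ι ≫ D.evR ▷ ι ≫ (λ_ ι).hom := by
  simp only [phiL, iA, comp_whiskerRight, Category.assoc]
  rw [D.zig1']

lemma phiR_iA_comp (z : ι ≫ κ ⟶ ι ≫ κ) :
    D.phiR (D.iA ≫ z) =
      (ρ_ κ).inv ≫ κ ◁ D.coevL ≫ κ ◁ z ≫ (α_ κ ι κ).inv ≫ D.evL ▷ κ ≫ (λ_ κ).hom := by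
  simp only [phiR, iA, Bicategory.whiskerLeft_comp, Category.assoc]
  rw [reassoc_of% D.zig4']

lemma phiR_comp_iA (z : ι ≫ κ ⟶ ι ≫ κ) :
    D.phiR (z ≫ D.iA) =
      (λ_ κ).inv ≫ D.coevR ▷ κ ≫ (α_ κ ι κ).hom ≫ κ ◁ z ≫ κ ◁ D.evR ≫ (ρ_ κ).hom := by
  simp only [phiR, iA, Bicategory.whiskerLeft_comp, Category.assoc]
  rw [D.zig2']

-- The string-diagram computations below all follow one pattern: rearrange by coherence,
-- use the interchange law to bring a unit next to its counit, and straighten the snake.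
lemma mu_phiL_iA_comp (z : ι ≫ κ ⟶ ι ≫ κ) :
    D.mu (D.phiL (D.iA ≫ z)) = D.phiR (D.iA ≫ z) := by
  rw [D.phiL_iA_comp, D.phiR_iA_comp, mu]
  calc _
      = (ρ_ κ).inv ≫
        κ ◁ ((λ_ (𝟙 a)).inv ≫ (𝟙 a) ◁ D.coevL ≫ (D.coevL ≫ z) ▷ (ι ≫ κ)) ≫
        κ ◁ ((α_ ι κ (ι ≫ κ)).hom ≫ ι ◁ (α_ κ ι κ).inv ≫ ι ◁ (D.evL ▷ κ) ≫
          ι ◁ (λ_ κ).hom) ≫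
        (α_ κ ι κ).inv ≫ D.evL ▷ κ ≫ (λ_ κ).hom := by bicategory
    _ = (ρ_ κ).inv ≫
        κ ◁ ((λ_ (𝟙 a)).inv ≫ (D.coevL ≫ z) ▷ (𝟙 a) ≫ (ι ≫ κ) ◁ D.coevL) ≫
        κ ◁ ((α_ ι κ (ι ≫ κ)).hom ≫ ι ◁ (α_ κ ι κ).inv ≫ ι ◁ (D.evL ▷ κ) ≫
          ι ◁ (λ_ κ).hom) ≫
        (α_ κ ι κ).inv ≫ D.evL ▷ κ ≫ (λ_ κ).hom := by
          rw [whisker_exchange (D.coevL ≫ z) D.coevL]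
    _ = (ρ_ κ).inv ≫ κ ◁ (D.coevL ≫ z) ≫
        κ ◁ (ι ◁ ((ρ_ κ).inv ≫ κ ◁ D.coevL ≫ (α_ κ ι κ).inv ≫ D.evL ▷ κ ≫
          (λ_ κ).hom)) ≫
        (α_ κ ι κ).inv ≫ D.evL ▷ κ ≫ (λ_ κ).hom := by bicategory
    _ = (ρ_ κ).inv ≫ κ ◁ D.coevL ≫ κ ◁ z ≫ (α_ κ ι κ).inv ≫ D.evL ▷ κ ≫
        (λ_ κ).hom := by rw [D.zig2]; bicategory

lemma nu_phiL_comp_iA (z : ι ≫ κ ⟶ ι ≫ κ) :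
    D.nu (D.phiL (z ≫ D.iA)) = D.phiR (z ≫ D.iA) := by
  rw [D.phiL_comp_iA, D.phiR_comp_iA, nu]
  calc _
      = (λ_ κ).inv ≫ D.coevR ▷ κ ≫ (α_ κ ι κ).hom ≫
        κ ◁ (((ρ_ ι).inv ≫ ι ◁ D.coevR) ▷ κ ≫ (α_ ι (κ ≫ ι) κ).hom ≫
          ι ◁ (α_ κ ι κ).hom ≫ (α_ ι κ (ι ≫ κ)).inv ≫
          (z ≫ D.evR) ▷ (ι ≫ κ) ≫ (𝟙 a) ◁ D.evR ≫ (λ_ (𝟙 a)).hom) ≫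
        (ρ_ κ).hom := by bicategory
    _ = (λ_ κ).inv ≫ D.coevR ▷ κ ≫ (α_ κ ι κ).hom ≫
        κ ◁ (((ρ_ ι).inv ≫ ι ◁ D.coevR) ▷ κ ≫ (α_ ι (κ ≫ ι) κ).hom ≫
          ι ◁ (α_ κ ι κ).hom ≫ (α_ ι κ (ι ≫ κ)).inv ≫
          (ι ≫ κ) ◁ D.evR ≫ (z ≫ D.evR) ▷ (𝟙 a) ≫ (λ_ (𝟙 a)).hom) ≫
        (ρ_ κ).hom := by rw [← reassoc_of% (whisker_exchange (z ≫ D.evR) D.evR)]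
    _ = (λ_ κ).inv ≫ D.coevR ▷ κ ≫ (α_ κ ι κ).hom ≫
        κ ◁ (ι ◁ ((λ_ κ).inv ≫ D.coevR ▷ κ ≫ (α_ κ ι κ).hom ≫ κ ◁ D.evR ≫
          (ρ_ κ).hom)) ≫ κ ◁ (z ≫ D.evR) ≫ (ρ_ κ).hom := by bicategory
    _ = (λ_ κ).inv ≫ D.coevR ▷ κ ≫ (α_ κ ι κ).hom ≫ κ ◁ z ≫ κ ◁ D.evR ≫
        (ρ_ κ).hom := by rw [D.zig4]; bicategory

lemma phiL_iA_comp_FtrInv (y : κ ≫ ι ⟶ κ ≫ ι) :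
    D.phiL (D.iA ≫ D.FtrInv y) = D.phiB y := by
  rw [D.phiL_iA_comp, FtrInv, phiB]
  calc _
      = (λ_ ι).inv ≫ D.coevL ▷ ι ≫
        ((ρ_ (ι ≫ κ)).inv ≫ (ι ≫ κ) ◁ D.coevL) ▷ ι ≫
        (α_ (ι ≫ κ) (ι ≫ κ) ι).hom ≫ (ι ≫ κ) ◁ (α_ ι κ ι).hom ≫
        (α_ (ι ≫ κ) ι (κ ≫ ι)).inv ≫
        ((α_ ι κ ι).hom ≫ ι ◁ y ≫ (α_ ι κ ι).inv ≫ D.evR ▷ ι ≫ (λ_ ι).hom) ▷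
          (κ ≫ ι) ≫ ι ◁ D.evL ≫ (ρ_ ι).hom := by bicategory
    _ = (λ_ ι).inv ≫ D.coevL ▷ ι ≫
        ((ρ_ (ι ≫ κ)).inv ≫ (ι ≫ κ) ◁ D.coevL) ▷ ι ≫
        (α_ (ι ≫ κ) (ι ≫ κ) ι).hom ≫ (ι ≫ κ) ◁ (α_ ι κ ι).hom ≫
        (α_ (ι ≫ κ) ι (κ ≫ ι)).inv ≫
        ((ι ≫ κ) ≫ ι) ◁ D.evL ≫
        ((α_ ι κ ι).hom ≫ ι ◁ y ≫ (α_ ι κ ι).inv ≫ D.evR ▷ ι ≫ (λ_ ι).hom) ▷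
          (𝟙 b) ≫ (ρ_ ι).hom := by
          rw [← reassoc_of% (whisker_exchange
            ((α_ ι κ ι).hom ≫ ι ◁ y ≫ (α_ ι κ ι).inv ≫ D.evR ▷ ι ≫ (λ_ ι).hom)
            D.evL)]
    _ = (λ_ ι).inv ≫ D.coevL ▷ ι ≫
        (ι ≫ κ) ◁ ((λ_ ι).inv ≫ D.coevL ▷ ι ≫ (α_ ι κ ι).hom ≫ ι ◁ D.evL ≫
          (ρ_ ι).hom) ≫
        (α_ ι κ ι).hom ≫ ι ◁ y ≫ (α_ ι κ ι).inv ≫ D.evR ▷ ι ≫ (λ_ ι).hom := by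
          bicategory
    _ = (λ_ ι).inv ≫ D.coevL ▷ ι ≫ (α_ ι κ ι).hom ≫ ι ◁ y ≫ (α_ ι κ ι).inv ≫
        D.evR ▷ ι ≫ (λ_ ι).hom := by rw [D.zig1]; bicategory

lemma phiB_Fdot (z : ι ≫ κ ⟶ ι ≫ κ) : D.phiB (D.Fdot z) = D.phiL (z ≫ D.iA) := by
  rw [D.phiL_comp_iA, phiB, Fdot]
  calc _
      = (λ_ ι).inv ≫
        (D.coevL ▷ ι ≫
          (ι ≫ κ) ◁ ((ρ_ ι).inv ≫ ι ◁ D.coevR ≫ (α_ ι κ ι).inv ≫ z ▷ ι)) ≫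
        (ι ≫ κ) ◁ (α_ ι κ ι).hom ≫ (α_ ι κ (ι ≫ (κ ≫ ι))).hom ≫
        ι ◁ (α_ κ ι (κ ≫ ι)).inv ≫ ι ◁ (D.evL ▷ (κ ≫ ι)) ≫
        ι ◁ (λ_ (κ ≫ ι)).hom ≫ (α_ ι κ ι).inv ≫ D.evR ▷ ι ≫ (λ_ ι).hom := by
          bicategory
    _ = (λ_ ι).inv ≫
        ((𝟙 a) ◁ ((ρ_ ι).inv ≫ ι ◁ D.coevR ≫ (α_ ι κ ι).inv ≫ z ▷ ι) ≫
          D.coevL ▷ ((ι ≫ κ) ≫ ι)) ≫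
        (ι ≫ κ) ◁ (α_ ι κ ι).hom ≫ (α_ ι κ (ι ≫ (κ ≫ ι))).hom ≫
        ι ◁ (α_ κ ι (κ ≫ ι)).inv ≫ ι ◁ (D.evL ▷ (κ ≫ ι)) ≫
        ι ◁ (λ_ (κ ≫ ι)).hom ≫ (α_ ι κ ι).inv ≫ D.evR ▷ ι ≫ (λ_ ι).hom := by
          rw [← whisker_exchange D.coevL
            ((ρ_ ι).inv ≫ ι ◁ D.coevR ≫ (α_ ι κ ι).inv ≫ z ▷ ι)]
    _ = (ρ_ ι).inv ≫ ι ◁ D.coevR ≫ (α_ ι κ ι).inv ≫ z ▷ ι ≫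
        (((λ_ ι).inv ≫ D.coevL ▷ ι ≫ (α_ ι κ ι).hom ≫ ι ◁ D.evL ≫
          (ρ_ ι).hom) ▷ κ) ▷ ι ≫ D.evR ▷ ι ≫ (λ_ ι).hom := by bicategory
    _ = (ρ_ ι).inv ≫ ι ◁ D.coevR ≫ (α_ ι κ ι).inv ≫ z ▷ ι ≫ D.evR ▷ ι ≫
        (λ_ ι).hom := by rw [D.zig1]; bicategory

lemma piR_eq_nu_phiL_comp_iA (z : ι ≫ κ ⟶ ι ≫ κ) :
    D.piR z = D.nu (D.phiL (z ≫ D.iA)) := by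
  rw [piR, SAinv, phiL_iA_comp_FtrInv, phiB_Fdot]

def nuInv (r : κ ⟶ κ) : ι ⟶ ι :=
  (ρ_ ι).inv ≫ ι ◁ D.coevR ≫ ι ◁ (r ▷ ι) ≫ (α_ ι κ ι).inv ≫ D.evR ▷ ι ≫ (λ_ ι).hom

lemma nuInv_nu (l : ι ⟶ ι) : D.nuInv (D.nu l) = l := by
  simp only [nuInv, nu]
  calc _
      = (ρ_ ι).inv ≫
        ι ◁ ((ρ_ (𝟙 b)).inv ≫
          ((𝟙 b) ◁ D.coevR ≫ (D.coevR ≫ κ ◁ l) ▷ (κ ≫ ι))) ≫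
        ι ◁ ((α_ κ ι (κ ≫ ι)).hom ≫ κ ◁ (α_ ι κ ι).inv ≫ κ ◁ (D.evR ▷ ι) ≫
          κ ◁ (λ_ ι).hom) ≫
        (α_ ι κ ι).inv ≫ D.evR ▷ ι ≫ (λ_ ι).hom := by bicategory
    _ = (ρ_ ι).inv ≫
        ι ◁ ((ρ_ (𝟙 b)).inv ≫
          ((D.coevR ≫ κ ◁ l) ▷ (𝟙 b) ≫ (κ ≫ ι) ◁ D.coevR)) ≫
        ι ◁ ((α_ κ ι (κ ≫ ι)).hom ≫ κ ◁ (α_ ι κ ι).inv ≫ κ ◁ (D.evR ▷ ι) ≫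
          κ ◁ (λ_ ι).hom) ≫
        (α_ ι κ ι).inv ≫ D.evR ▷ ι ≫ (λ_ ι).hom := by
          rw [whisker_exchange (D.coevR ≫ κ ◁ l) D.coevR]
    _ = (ρ_ ι).inv ≫ ι ◁ (D.coevR ≫ κ ◁ l) ≫
        ι ◁ (κ ◁ ((ρ_ ι).inv ≫ ι ◁ D.coevR ≫ (α_ ι κ ι).inv ≫ D.evR ▷ ι ≫
          (λ_ ι).hom)) ≫
        (α_ ι κ ι).inv ≫ D.evR ▷ ι ≫ (λ_ ι).hom := by bicategory
    _ = (ρ_ ι).inv ≫ ι ◁ D.coevR ≫ (α_ ι κ ι).inv ≫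
        ((ι ≫ κ) ◁ l ≫ D.evR ▷ ι) ≫ (λ_ ι).hom := by rw [D.zig3]; bicategory
    _ = ((ρ_ ι).inv ≫ ι ◁ D.coevR ≫ (α_ ι κ ι).inv ≫ D.evR ▷ ι ≫ (λ_ ι).hom) ≫
        l := by rw [whisker_exchange D.evR l]; bicategory
    _ = l := by rw [D.zig3, Category.id_comp]

lemma nu_injective : Function.Injective D.nu :=
  Function.LeftInverse.injective D.nuInv_nu

lemma invFun_nu (l : ι ⟶ ι) :
    (@Function.invFun (ι ⟶ ι) (κ ⟶ κ) ⟨𝟙 ι⟩ D.nu) (D.nu l) = l :=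
  @Function.leftInverse_invFun _ _ ⟨𝟙 ι⟩ _ D.nu_injective l

end FrobeniusDuality

open FrobeniusDuality in
theorem counit_convolution_identities_general
    {C : Type u} [Bicategory.{w, v} C]
    {a b : C} {ι : a ⟶ b} {κ : b ⟶ a} (D : FrobeniusDuality ι κ) :
    (∀ z : ι ≫ κ ⟶ ι ≫ κ, D.conv (D.iA ≫ z) (𝟙 (ι ≫ κ)) = D.sL (D.piL z)) ∧
    (∀ z : ι ≫ κ ⟶ ι ≫ κ, D.conv (𝟙 (ι ≫ κ)) (D.iA ≫ z) = D.tL (D.piL z)) ∧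
    (∀ z : ι ≫ κ ⟶ ι ≫ κ, D.conv (𝟙 (ι ≫ κ)) (z ≫ D.iA) = D.sR (D.piR z)) ∧
    (∀ z : ι ≫ κ ⟶ ι ≫ κ, D.conv (z ≫ D.iA) (𝟙 (ι ≫ κ)) = D.tR (D.piR z)) := by
  refine ⟨fun z => D.conv_id_right _, fun z => ?_, fun z => ?_, fun z => ?_⟩
  · rw [conv_id_left, tL, piL, mu_phiL_iA_comp]
  · rw [conv_id_left, sR, piR_eq_nu_phiL_comp_iA, nu_phiL_comp_iA]
  · rw [conv_id_right, tR, piR_eq_nu_phiL_comp_iA, invFun_nu]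

open FrobeniusDuality in
/-- In the Hopf algebroid `A = C²(ι×κ,ι×κ)` of a D2 Frobenius 1-morphism,
with `i_A = coevL ∘ evR`: (i) `(a∘i_A) ∗ 1 = s_L(π_L(a))`; (ii) `1 ∗ (a∘i_A) = t_L(π_L(a))`;
(iii) `1 ∗ (i_A∘a) = s_R(π_R(a))`; (iv) `(i_A∘a) ∗ 1 = t_R(π_R(a))`.
(Vertical composition `u ∘ v` of the paper is `v ≫ u` here.) -/
theorem counit_convolution_identities
    {C : Type u} [Bicategory.{w, v} C] [∀ (x y : C), Preadditive (x ⟶ y)]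
    (wl : ∀ {x y z : C} (f : x ⟶ y) {g h : y ⟶ z} (η θ : g ⟶ h),
      f ◁ (η + θ) = f ◁ η + f ◁ θ)
    (wr : ∀ {x y z : C} {f g : x ⟶ y} (η θ : f ⟶ g) (h : y ⟶ z),
      (η + θ) ▷ h = η ▷ h + θ ▷ h)
    {a b : C} {ι : a ⟶ b} {κ : b ⟶ a} (D : FrobeniusDuality ι κ)
    (n : ℕ) (y x : ℕ → (ι ≫ κ ⟶ ι ≫ κ))
    (hqb : ∑ i ∈ Finset.range n, D.d2comp (x i) (y i) = 𝟙 ((ι ≫ κ) ≫ ι)) :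
    (∀ z : ι ≫ κ ⟶ ι ≫ κ, D.conv (D.iA ≫ z) (𝟙 (ι ≫ κ)) = D.sL (D.piL z)) ∧
    (∀ z : ι ≫ κ ⟶ ι ≫ κ, D.conv (𝟙 (ι ≫ κ)) (D.iA ≫ z) = D.tL (D.piL z)) ∧
    (∀ z : ι ≫ κ ⟶ ι ≫ κ, D.conv (𝟙 (ι ≫ κ)) (z ≫ D.iA) = D.sR (D.piR z)) ∧
    (∀ z : ι ≫ κ ⟶ ι ≫ κ, D.conv (z ≫ D.iA) (𝟙 (ι ≫ κ)) = D.tR (D.piR z)) :=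
  counit_convolution_identities_general D
end

section
/- The element i_A = coev_L ∘ ev_R is a two-sided non-degenerate integral in the Hopf algebroid A associated to a D2 Frobenius 1-morphism ι: it satisfies a ∘ i_A = s_L(π_L(a)) ∘ i_A and i_A ∘ a = i_A ∘ s_R(π_R(a)) for all a ∈ A, it is S_A-invariant, and the maps φ* ↦ φ*⇀i_A : A* → A and *φ ↦ *φ⇁i_A : *A → A are bijections. -/
open CategoryTheory Bicategory

universe w v u

variable {C : Type u} [Bicategory.{w, v} C] {a b : C}

section Lemmas
open CategoryTheory Bicategory

namespace FrobeniusDuality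

universe w' v' u'
variable {C : Type u'} [Bicategory.{w', v'} C] {a b : C}
variable {ι : a ⟶ b} {κ : b ⟶ a} (D : FrobeniusDuality ι κ)

/-- zig1 in leftZigzag form -/
theorem z1 : D.coevL ▷ ι ⊗≫ ι ◁ D.evL = (λ_ ι).hom ≫ (ρ_ ι).inv := by
  have h := D.zig1
  rw [← IsIso.eq_inv_comp] at h
  calc D.coevL ▷ ι ⊗≫ ι ◁ D.evL
      = (D.coevL ▷ ι ≫ (α_ ι κ ι).hom ≫ ι ◁ D.evL ≫ (ρ_ ι).hom) ≫ (ρ_ ι).inv := by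
        bicategory
    _ = (λ_ ι).hom ≫ (ρ_ ι).inv := by rw [h]; simp

theorem z2 : κ ◁ D.coevL ⊗≫ D.evL ▷ κ = (ρ_ κ).hom ≫ (λ_ κ).inv := by
  have h := D.zig2
  rw [← IsIso.eq_inv_comp] at h
  calc κ ◁ D.coevL ⊗≫ D.evL ▷ κ
      = (κ ◁ D.coevL ≫ (α_ κ ι κ).inv ≫ D.evL ▷ κ ≫ (λ_ κ).hom) ≫ (λ_ κ).inv := by
        bicategory
    _ = (ρ_ κ).hom ≫ (λ_ κ).inv := by rw [h]; simp

theorem z3 : ι ◁ D.coevR ⊗≫ D.evR ▷ ι = (ρ_ ι).hom ≫ (λ_ ι).inv := by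
  have h := D.zig3
  rw [← IsIso.eq_inv_comp] at h
  calc ι ◁ D.coevR ⊗≫ D.evR ▷ ι
      = (ι ◁ D.coevR ≫ (α_ ι κ ι).inv ≫ D.evR ▷ ι ≫ (λ_ ι).hom) ≫ (λ_ ι).inv := by
        bicategory
    _ = (ρ_ ι).hom ≫ (λ_ ι).inv := by rw [h]; simp

theorem z4 : D.coevR ▷ κ ⊗≫ κ ◁ D.evR = (λ_ κ).hom ≫ (ρ_ κ).inv := by
  have h := D.zig4
  rw [← IsIso.eq_inv_comp] at h
  calc D.coevR ▷ κ ⊗≫ κ ◁ D.evR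
      = (D.coevR ▷ κ ≫ (α_ κ ι κ).hom ≫ κ ◁ D.evR ≫ (ρ_ κ).hom) ≫ (ρ_ κ).inv := by
        bicategory
    _ = (λ_ κ).hom ≫ (ρ_ κ).inv := by rw [h]; simp

end FrobeniusDuality
end Lemmas
namespace FrobeniusDuality
universe w' v' u'
variable {C : Type u'} [Bicategory.{w', v'} C] {a b : C}
variable {ι : a ⟶ b} {κ : b ⟶ a} (D : FrobeniusDuality ι κ)

/-- transpose of `f : 𝟙 a ⟶ ι ≫ κ` along the left adjunction -/
def Gfun (f : 𝟙 a ⟶ ι ≫ κ) : ι ⟶ ι :=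
  (λ_ ι).inv ≫ f ▷ ι ≫ (α_ ι κ ι).hom ≫ ι ◁ D.evL ≫ (ρ_ ι).hom

/-- the functional `P z = "ν-closure of z ≫ evR"` -/
def Pfun (z : ι ≫ κ ⟶ ι ≫ κ) : κ ⟶ κ :=
  (λ_ κ).inv ≫ D.coevR ▷ κ ≫ (α_ κ ι κ).hom ≫ κ ◁ (z ≫ D.evR) ≫ (ρ_ κ).hom

/-- explicit inverse of `ν` -/
def nuInvD (r : κ ⟶ κ) : ι ⟶ ι :=
  (ρ_ ι).inv ≫ ι ◁ D.coevR ≫ ι ◁ (r ▷ ι) ≫ (α_ ι κ ι).inv ≫ D.evR ▷ ι ≫ (λ_ ι).hom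

theorem phiL_evR (f : 𝟙 a ⟶ ι ≫ κ) : D.phiL (D.evR ≫ f) = D.Gfun f := by
  calc D.phiL (D.evR ≫ f)
      = ((ρ_ ι).inv ≫ ι ◁ D.coevR ≫ (α_ ι κ ι).inv ≫ D.evR ▷ ι ≫ (λ_ ι).hom) ≫
          (λ_ ι).inv ≫ f ▷ ι ≫ (α_ ι κ ι).hom ≫ ι ◁ D.evL ≫ (ρ_ ι).hom := by
        dsimp only [phiL]; rw [comp_whiskerRight]; simp
    _ = D.Gfun f := by rw [D.zig3]; dsimp only [Gfun]; simp

theorem coevL_Gfun (f : 𝟙 a ⟶ ι ≫ κ) : D.coevL ≫ D.Gfun f ▷ κ = f := by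
  calc D.coevL ≫ D.Gfun f ▷ κ
      = 𝟙 (𝟙 a) ⊗≫ (𝟙 a ◁ D.coevL ≫ f ▷ (ι ≫ κ)) ⊗≫ ι ◁ (D.evL ▷ κ) ⊗≫ 𝟙 (ι ≫ κ) := by
        dsimp only [Gfun]; bicategory
    _ = 𝟙 (𝟙 a) ⊗≫ (f ▷ 𝟙 a ≫ (ι ≫ κ) ◁ D.coevL) ⊗≫ ι ◁ (D.evL ▷ κ) ⊗≫ 𝟙 (ι ≫ κ) := by
        rw [whisker_exchange]
    _ = f ⊗≫ ι ◁ (κ ◁ D.coevL ⊗≫ D.evL ▷ κ) ⊗≫ 𝟙 (ι ≫ κ) := by bicategory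
    _ = f := by rw [D.z2]; bicategory

theorem left_integral (z : ι ≫ κ ⟶ ι ≫ κ) : D.iA ≫ z = D.iA ≫ D.sL (D.piL z) := by
  have h : D.piL z = D.Gfun (D.coevL ≫ z) := by
    dsimp only [piL, iA]; rw [Category.assoc, phiL_evR]
  dsimp only [iA, sL]
  rw [h]; simp only [Category.assoc]; rw [coevL_Gfun]

end FrobeniusDuality
namespace FrobeniusDuality
universe w2 v2 u2
variable {C : Type u2} [Bicategory.{w2, v2} C] {a b : C}
variable {ι : a ⟶ b} {κ : b ⟶ a} (D : FrobeniusDuality ι κ)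

/-- the "cup with z inserted" 2-cell -/
def Bfun (z : ι ≫ κ ⟶ ι ≫ κ) : 𝟙 a ⟶ (ι ≫ κ) ≫ (ι ≫ κ) :=
  D.coevL ⊗≫ ι ◁ (D.coevR ▷ κ) ⊗≫ z ▷ (ι ≫ κ) ⊗≫ 𝟙 ((ι ≫ κ) ≫ (ι ≫ κ))

def Ffun (z : ι ≫ κ ⟶ ι ≫ κ) : 𝟙 a ⟶ ι ≫ κ :=
  D.Bfun z ≫ D.evR ▷ (ι ≫ κ) ≫ (λ_ (ι ≫ κ)).hom

theorem coevL_SAinv (z : ι ≫ κ ⟶ ι ≫ κ) : D.coevL ≫ D.SAinv z = D.Ffun z := by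
  calc D.coevL ≫ D.SAinv z
      = 𝟙 (𝟙 a) ⊗≫ (D.coevL ▷ 𝟙 a ≫ (ι ≫ κ) ◁ D.Bfun z) ⊗≫
          ι ◁ (D.evL ▷ (κ ≫ ι ≫ κ)) ⊗≫ D.evR ▷ (ι ≫ κ) ⊗≫ 𝟙 (ι ≫ κ) := by
        dsimp only [SAinv, FtrInv, Fdot, Bfun]; bicategory
    _ = 𝟙 (𝟙 a) ⊗≫ (𝟙 a ◁ D.Bfun z ≫ D.coevL ▷ ((ι ≫ κ) ≫ (ι ≫ κ))) ⊗≫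
          ι ◁ (D.evL ▷ (κ ≫ ι ≫ κ)) ⊗≫ D.evR ▷ (ι ≫ κ) ⊗≫ 𝟙 (ι ≫ κ) := by
        rw [← whisker_exchange]
    _ = D.Bfun z ⊗≫ ((D.coevL ▷ ι ⊗≫ ι ◁ D.evL) ▷ (κ ≫ ι ≫ κ)) ⊗≫
          D.evR ▷ (ι ≫ κ) ⊗≫ 𝟙 (ι ≫ κ) := by
        bicategory
    _ = D.Ffun z := by rw [D.z1]; dsimp only [Ffun, Bfun]; bicategory

end FrobeniusDuality
namespace FrobeniusDuality
universe w2 v2 u2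
variable {C : Type u2} [Bicategory.{w2, v2} C] {a b : C}
variable {ι : a ⟶ b} {κ : b ⟶ a} (D : FrobeniusDuality ι κ)

/-- rotation of `z` by the right adjunction -/
def Mfun (z : ι ≫ κ ⟶ ι ≫ κ) : ι ⟶ ι :=
  (ρ_ ι).inv ≫ ι ◁ D.coevR ≫ (α_ ι κ ι).inv ≫ z ▷ ι ≫ D.evR ▷ ι ≫ (λ_ ι).hom

theorem evR_Pfun (z : ι ≫ κ ⟶ ι ≫ κ) : ι ◁ D.Pfun z ≫ D.evR = z ≫ D.evR := by
  calc ι ◁ D.Pfun z ≫ D.evR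
      = 𝟙 (ι ≫ κ) ⊗≫ (ι ◁ D.coevR) ▷ κ ⊗≫
          ((ι ≫ κ) ◁ (z ≫ D.evR) ≫ D.evR ▷ 𝟙 a) ⊗≫ 𝟙 (𝟙 a) := by
        dsimp only [Pfun]; bicategory
    _ = 𝟙 (ι ≫ κ) ⊗≫ (ι ◁ D.coevR) ▷ κ ⊗≫
          (D.evR ▷ (ι ≫ κ) ≫ 𝟙 a ◁ (z ≫ D.evR)) ⊗≫ 𝟙 (𝟙 a) := by
        rw [← whisker_exchange]
    _ = 𝟙 (ι ≫ κ) ⊗≫ ((ι ◁ D.coevR ⊗≫ D.evR ▷ ι) ▷ κ) ⊗≫ (z ≫ D.evR) ⊗≫ 𝟙 (𝟙 a) := by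
        bicategory
    _ = z ≫ D.evR := by rw [D.z3]; bicategory

theorem Gfun_Ffun (z : ι ≫ κ ⟶ ι ≫ κ) : D.Gfun (D.Ffun z) = D.Mfun z := by
  calc D.Gfun (D.Ffun z)
      = 𝟙 ι ⊗≫ D.coevL ▷ ι ⊗≫ (D.Mfun z ▷ (κ ≫ ι) ≫ ι ◁ D.evL) ⊗≫ 𝟙 ι := by
        dsimp only [Gfun, Ffun, Bfun, Mfun]; bicategory
    _ = 𝟙 ι ⊗≫ D.coevL ▷ ι ⊗≫ (ι ◁ D.evL ≫ D.Mfun z ▷ 𝟙 b) ⊗≫ 𝟙 ι := by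
        rw [← whisker_exchange]
    _ = 𝟙 ι ⊗≫ (D.coevL ▷ ι ⊗≫ ι ◁ D.evL) ⊗≫ D.Mfun z ▷ 𝟙 b ⊗≫ 𝟙 ι := by bicategory
    _ = D.Mfun z := by rw [D.z1]; bicategory

theorem nu_Mfun (z : ι ≫ κ ⟶ ι ≫ κ) : D.nu (D.Mfun z) = D.Pfun z := by
  calc D.nu (D.Mfun z)
      = 𝟙 κ ⊗≫ D.coevR ▷ κ ⊗≫ κ ◁ (ι ◁ (D.coevR ▷ κ)) ⊗≫
          κ ◁ ((z ≫ D.evR) ▷ (ι ≫ κ) ≫ 𝟙 a ◁ D.evR) ⊗≫ 𝟙 κ := by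
        dsimp only [nu, Mfun]; bicategory
    _ = 𝟙 κ ⊗≫ D.coevR ▷ κ ⊗≫ κ ◁ (ι ◁ (D.coevR ▷ κ)) ⊗≫
          κ ◁ ((ι ≫ κ) ◁ D.evR ≫ (z ≫ D.evR) ▷ 𝟙 a) ⊗≫ 𝟙 κ := by
        rw [← whisker_exchange]
    _ = 𝟙 κ ⊗≫ D.coevR ▷ κ ⊗≫ (κ ≫ ι) ◁ (D.coevR ▷ κ ⊗≫ κ ◁ D.evR) ⊗≫
          κ ◁ (z ≫ D.evR) ⊗≫ 𝟙 κ := by bicategory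
    _ = D.Pfun z := by rw [D.z4]; dsimp only [Pfun]; bicategory

theorem piR_eq (z : ι ≫ κ ⟶ ι ≫ κ) : D.piR z = D.Pfun z := by
  dsimp only [piR, iA]
  rw [Category.assoc, phiL_evR, coevL_SAinv, Gfun_Ffun, nu_Mfun]

theorem right_integral (z : ι ≫ κ ⟶ ι ≫ κ) : z ≫ D.iA = D.sR (D.piR z) ≫ D.iA := by
  dsimp only [iA, sR]
  rw [piR_eq, ← Category.assoc, ← Category.assoc, ← evR_Pfun]

end FrobeniusDuality
namespace FrobeniusDuality
universe w2 v2 u2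
variable {C : Type u2} [Bicategory.{w2, v2} C] {a b : C}
variable {ι : a ⟶ b} {κ : b ⟶ a} (D : FrobeniusDuality ι κ)

theorem Ftr_iA : D.Ftr D.iA = 𝟙 (κ ≫ ι) := by
  calc D.Ftr D.iA
      = 𝟙 (κ ≫ ι) ⊗≫ ((D.coevR ▷ κ ⊗≫ κ ◁ D.evR) ▷ ι) ⊗≫
          κ ◁ (D.coevL ▷ ι ⊗≫ ι ◁ D.evL) ⊗≫ 𝟙 (κ ≫ ι) := by
        dsimp only [Ftr, iA]; bicategory
    _ = 𝟙 (κ ≫ ι) := by rw [D.z4, D.z1]; bicategory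

theorem FdotInv_id : D.FdotInv (𝟙 (κ ≫ ι)) = D.iA := by
  calc D.FdotInv (𝟙 (κ ≫ ι))
      = 𝟙 (ι ≫ κ) ⊗≫ (D.coevL ▷ (ι ≫ κ) ≫ (ι ≫ κ) ◁ D.evR) ⊗≫ 𝟙 (ι ≫ κ) := by
        dsimp only [FdotInv]; bicategory
    _ = 𝟙 (ι ≫ κ) ⊗≫ (𝟙 a ◁ D.evR ≫ D.coevL ▷ 𝟙 a) ⊗≫ 𝟙 (ι ≫ κ) := by
        rw [whisker_exchange]
    _ = D.iA := by dsimp only [iA]; bicategory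

theorem SA_iA : D.SA D.iA = D.iA := by
  rw [SA, Ftr_iA, FdotInv_id]

end FrobeniusDuality
namespace FrobeniusDuality
universe w2 v2 u2
variable {C : Type u2} [Bicategory.{w2, v2} C] {a b : C}
variable {ι : a ⟶ b} {κ : b ⟶ a} (D : FrobeniusDuality ι κ)

/-- recovery along the right adjunction, on the `κ` side -/
def RecR (h : ι ≫ κ ⟶ 𝟙 a) : κ ⟶ κ :=
  (λ_ κ).inv ≫ D.coevR ▷ κ ≫ (α_ κ ι κ).hom ≫ κ ◁ h ≫ (ρ_ κ).hom

/-- recovery along the right adjunction, on the `ι` side -/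
def RecL (h : ι ≫ κ ⟶ 𝟙 a) : ι ⟶ ι :=
  (ρ_ ι).inv ≫ ι ◁ D.coevR ≫ (α_ ι κ ι).inv ≫ h ▷ ι ≫ (λ_ ι).hom

theorem Pfun_eq (z : ι ≫ κ ⟶ ι ≫ κ) : D.Pfun z = D.RecR (z ≫ D.evR) := rfl

theorem nu_eq (l : ι ⟶ ι) : D.nu l = D.RecR (l ▷ κ ≫ D.evR) := by
  dsimp only [nu, RecR]; bicategory

theorem nuInvD_eq (r : κ ⟶ κ) : D.nuInvD r = D.RecL (ι ◁ r ≫ D.evR) := by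
  dsimp only [nuInvD, RecL]; bicategory

theorem recov1 (h : ι ≫ κ ⟶ 𝟙 a) : ι ◁ D.RecR h ≫ D.evR = h := by
  calc ι ◁ D.RecR h ≫ D.evR
      = 𝟙 (ι ≫ κ) ⊗≫ (ι ◁ D.coevR) ▷ κ ⊗≫
          ((ι ≫ κ) ◁ h ≫ D.evR ▷ 𝟙 a) ⊗≫ 𝟙 (𝟙 a) := by
        dsimp only [RecR]; bicategory
    _ = 𝟙 (ι ≫ κ) ⊗≫ (ι ◁ D.coevR) ▷ κ ⊗≫
          (D.evR ▷ (ι ≫ κ) ≫ 𝟙 a ◁ h) ⊗≫ 𝟙 (𝟙 a) := by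
        rw [← whisker_exchange]
    _ = 𝟙 (ι ≫ κ) ⊗≫ ((ι ◁ D.coevR ⊗≫ D.evR ▷ ι) ▷ κ) ⊗≫ h ⊗≫ 𝟙 (𝟙 a) := by
        bicategory
    _ = h := by rw [D.z3]; bicategory

theorem recov2 (h : ι ≫ κ ⟶ 𝟙 a) : D.RecL h ▷ κ ≫ D.evR = h := by
  calc D.RecL h ▷ κ ≫ D.evR
      = 𝟙 (ι ≫ κ) ⊗≫ (ι ◁ D.coevR) ▷ κ ⊗≫ (h ▷ (ι ≫ κ) ≫ 𝟙 a ◁ D.evR) ⊗≫ 𝟙 (𝟙 a) := by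
        dsimp only [RecL]; bicategory
    _ = 𝟙 (ι ≫ κ) ⊗≫ (ι ◁ D.coevR) ▷ κ ⊗≫ ((ι ≫ κ) ◁ D.evR ≫ h ▷ 𝟙 a) ⊗≫ 𝟙 (𝟙 a) := by
        rw [← whisker_exchange]
    _ = 𝟙 (ι ≫ κ) ⊗≫ ι ◁ (D.coevR ▷ κ ⊗≫ κ ◁ D.evR) ⊗≫ h ⊗≫ 𝟙 (𝟙 a) := by bicategory
    _ = h := by rw [D.z4]; bicategory

theorem recEq1 (r : κ ⟶ κ) : D.RecR (ι ◁ r ≫ D.evR) = r := by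
  calc D.RecR (ι ◁ r ≫ D.evR)
      = 𝟙 κ ⊗≫ (D.coevR ▷ κ ≫ (κ ≫ ι) ◁ r) ⊗≫ κ ◁ D.evR ⊗≫ 𝟙 κ := by
        dsimp only [RecR]; bicategory
    _ = 𝟙 κ ⊗≫ (𝟙 b ◁ r ≫ D.coevR ▷ κ) ⊗≫ κ ◁ D.evR ⊗≫ 𝟙 κ := by
        rw [← whisker_exchange]
    _ = r ⊗≫ (D.coevR ▷ κ ⊗≫ κ ◁ D.evR) ⊗≫ 𝟙 κ := by bicategory
    _ = r := by rw [D.z4]; bicategory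

theorem recEq2 (l : ι ⟶ ι) : D.RecL (l ▷ κ ≫ D.evR) = l := by
  calc D.RecL (l ▷ κ ≫ D.evR)
      = 𝟙 ι ⊗≫ (ι ◁ D.coevR ≫ l ▷ (κ ≫ ι)) ⊗≫ D.evR ▷ ι ⊗≫ 𝟙 ι := by
        dsimp only [RecL]; bicategory
    _ = 𝟙 ι ⊗≫ (l ▷ 𝟙 b ≫ ι ◁ D.coevR) ⊗≫ D.evR ▷ ι ⊗≫ 𝟙 ι := by
        rw [whisker_exchange]
    _ = l ⊗≫ (ι ◁ D.coevR ⊗≫ D.evR ▷ ι) ⊗≫ 𝟙 ι := by bicategory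
    _ = l := by rw [D.z3]; bicategory

theorem nu_nuInvD (r : κ ⟶ κ) : D.nu (D.nuInvD r) = r := by
  rw [nu_eq, nuInvD_eq, recov2, recEq1]

theorem nuInvD_nu (l : ι ⟶ ι) : D.nuInvD (D.nu l) = l := by
  rw [nuInvD_eq, nu_eq, recov1, recEq2]

theorem tR_eq (r : κ ⟶ κ) : D.tR r = D.nuInvD r ▷ κ := by
  dsimp only [tR]
  have : Nonempty (ι ⟶ ι) := ⟨𝟙 ι⟩
  congr 1
  have hinj : Function.Injective D.nu :=
    Function.LeftInverse.injective (g := D.nuInvD) (fun l => D.nuInvD_nu l)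
  apply hinj
  rw [D.nu_nuInvD]
  exact Function.invFun_eq ⟨D.nuInvD r, D.nu_nuInvD r⟩

end FrobeniusDuality
namespace FrobeniusDuality
universe w2 v2 u2
variable {C : Type u2} [Bicategory.{w2, v2} C] {a b : C}
variable {ι : a ⟶ b} {κ : b ⟶ a} (D : FrobeniusDuality ι κ)

theorem conv_iA (w : ι ≫ κ ⟶ ι ≫ κ) : D.conv D.iA w = w := by
  calc D.conv D.iA w
      = 𝟙 (ι ≫ κ) ⊗≫ ((ι ◁ D.coevR ⊗≫ D.evR ▷ ι) ▷ κ) ⊗≫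
          (D.coevL ▷ (ι ≫ κ) ≫ (ι ≫ κ) ◁ w) ⊗≫ ι ◁ (D.evL ▷ κ) ⊗≫ 𝟙 (ι ≫ κ) := by
        dsimp only [conv, iA]; bicategory
    _ = 𝟙 (ι ≫ κ) ⊗≫ ((ι ◁ D.coevR ⊗≫ D.evR ▷ ι) ▷ κ) ⊗≫
          (𝟙 a ◁ w ≫ D.coevL ▷ (ι ≫ κ)) ⊗≫ ι ◁ (D.evL ▷ κ) ⊗≫ 𝟙 (ι ≫ κ) := by
        rw [← whisker_exchange]
    _ = 𝟙 (ι ≫ κ) ⊗≫ ((ι ◁ D.coevR ⊗≫ D.evR ▷ ι) ▷ κ) ⊗≫ w ⊗≫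
          ((D.coevL ▷ ι ⊗≫ ι ◁ D.evL) ▷ κ) ⊗≫ 𝟙 (ι ≫ κ) := by
        bicategory
    _ = w := by rw [D.z3, D.z1]; bicategory

theorem RecR_sR (r : κ ⟶ κ) (h : ι ≫ κ ⟶ 𝟙 a) :
    D.RecR (ι ◁ r ≫ h) = r ≫ D.RecR h := by
  calc D.RecR (ι ◁ r ≫ h)
      = 𝟙 κ ⊗≫ (D.coevR ▷ κ ≫ (κ ≫ ι) ◁ r) ⊗≫ κ ◁ h ⊗≫ 𝟙 κ := by
        dsimp only [RecR]; bicategory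
    _ = 𝟙 κ ⊗≫ (𝟙 b ◁ r ≫ D.coevR ▷ κ) ⊗≫ κ ◁ h ⊗≫ 𝟙 κ := by
        rw [← whisker_exchange]
    _ = r ≫ D.RecR h := by dsimp only [RecR]; bicategory

theorem Pfun_sR (r : κ ⟶ κ) (z : ι ≫ κ ⟶ ι ≫ κ) :
    D.Pfun (D.sR r ≫ z) = r ≫ D.Pfun z := by
  have h : (D.sR r ≫ z) ≫ D.evR = ι ◁ r ≫ (z ≫ D.evR) := by
    dsimp only [sR]; simp [Category.assoc]
  rw [Pfun_eq, h, RecR_sR, ← Pfun_eq]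

theorem RecR_tR (r : κ ⟶ κ) (h : ι ≫ κ ⟶ 𝟙 a) :
    D.RecR ((D.nuInvD r ▷ κ) ≫ h) = D.RecR h ≫ r := by
  calc D.RecR ((D.nuInvD r ▷ κ) ≫ h)
      = 𝟙 κ ⊗≫ (D.coevR ▷ (𝟙 b ≫ κ) ≫ (κ ≫ ι) ◁ ((D.coevR ≫ r ▷ ι) ▷ κ)) ⊗≫
          κ ◁ (D.evR ▷ (ι ≫ κ)) ⊗≫ κ ◁ h ⊗≫ 𝟙 κ := by
        dsimp only [RecR, nuInvD]; bicategory
    _ = 𝟙 κ ⊗≫ (𝟙 b ◁ ((D.coevR ≫ r ▷ ι) ▷ κ) ≫ D.coevR ▷ ((κ ≫ ι) ≫ κ)) ⊗≫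
          κ ◁ (D.evR ▷ (ι ≫ κ)) ⊗≫ κ ◁ h ⊗≫ 𝟙 κ := by
        rw [← whisker_exchange]
    _ = 𝟙 κ ⊗≫ (D.coevR ≫ r ▷ ι) ▷ κ ⊗≫ ((D.coevR ▷ κ ⊗≫ κ ◁ D.evR) ▷ (ι ≫ κ)) ⊗≫
          κ ◁ h ⊗≫ 𝟙 κ := by bicategory
    _ = 𝟙 κ ⊗≫ D.coevR ▷ κ ⊗≫ (r ▷ (ι ≫ κ) ≫ κ ◁ h) ⊗≫ 𝟙 κ := by
        rw [D.z4]; bicategory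
    _ = 𝟙 κ ⊗≫ D.coevR ▷ κ ⊗≫ (κ ◁ h ≫ r ▷ 𝟙 a) ⊗≫ 𝟙 κ := by
        rw [← whisker_exchange]
    _ = D.RecR h ≫ r := by dsimp only [RecR]; bicategory

theorem Pfun_tR (r : κ ⟶ κ) (z : ι ≫ κ ⟶ ι ≫ κ) :
    D.Pfun ((D.nuInvD r ▷ κ) ≫ z) = D.Pfun z ≫ r := by
  have h : ((D.nuInvD r ▷ κ) ≫ z) ≫ D.evR = (D.nuInvD r ▷ κ) ≫ (z ≫ D.evR) := by
    simp [Category.assoc]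
  rw [Pfun_eq, h, RecR_tR, ← Pfun_eq]

theorem conv_whiskerL (g : ι ⟶ ι) (v u : ι ≫ κ ⟶ ι ≫ κ) :
    D.conv (g ▷ κ ≫ v) u = g ▷ κ ≫ D.conv v u := by
  calc D.conv (g ▷ κ ≫ v) u
      = 𝟙 (ι ≫ κ) ⊗≫ (ι ◁ (D.coevR ▷ κ) ≫ g ▷ ((κ ≫ ι) ≫ κ)) ⊗≫ v ▷ (ι ≫ κ) ⊗≫
          (ι ≫ κ) ◁ u ⊗≫ ι ◁ (D.evL ▷ κ) ⊗≫ 𝟙 (ι ≫ κ) := by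
        dsimp only [conv]; bicategory
    _ = 𝟙 (ι ≫ κ) ⊗≫ (g ▷ (𝟙 b ≫ κ) ≫ ι ◁ (D.coevR ▷ κ)) ⊗≫ v ▷ (ι ≫ κ) ⊗≫
          (ι ≫ κ) ◁ u ⊗≫ ι ◁ (D.evL ▷ κ) ⊗≫ 𝟙 (ι ≫ κ) := by
        rw [whisker_exchange]
    _ = g ▷ κ ≫ D.conv v u := by dsimp only [conv]; bicategory

theorem conv_sR (r : κ ⟶ κ) (u w : ι ≫ κ ⟶ ι ≫ κ) :
    D.conv u (D.sR r ≫ w) = D.sR r ≫ D.conv u w := by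
  calc D.conv u (D.sR r ≫ w)
      = 𝟙 (ι ≫ κ) ⊗≫ ι ◁ (D.coevR ▷ κ) ⊗≫ (u ▷ (ι ≫ κ) ≫ (ι ≫ κ) ◁ (ι ◁ r)) ⊗≫
          (ι ≫ κ) ◁ w ⊗≫ ι ◁ (D.evL ▷ κ) ⊗≫ 𝟙 (ι ≫ κ) := by
        dsimp only [conv, sR]; bicategory
    _ = 𝟙 (ι ≫ κ) ⊗≫ ι ◁ (D.coevR ▷ κ) ⊗≫ ((ι ≫ κ) ◁ (ι ◁ r) ≫ u ▷ (ι ≫ κ)) ⊗≫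
          (ι ≫ κ) ◁ w ⊗≫ ι ◁ (D.evL ▷ κ) ⊗≫ 𝟙 (ι ≫ κ) := by
        rw [← whisker_exchange]
    _ = 𝟙 (ι ≫ κ) ⊗≫ ι ◁ (D.coevR ▷ κ ≫ (κ ≫ ι) ◁ r) ⊗≫ u ▷ (ι ≫ κ) ⊗≫
          (ι ≫ κ) ◁ w ⊗≫ ι ◁ (D.evL ▷ κ) ⊗≫ 𝟙 (ι ≫ κ) := by bicategory
    _ = 𝟙 (ι ≫ κ) ⊗≫ ι ◁ (𝟙 b ◁ r ≫ D.coevR ▷ κ) ⊗≫ u ▷ (ι ≫ κ) ⊗≫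
          (ι ≫ κ) ◁ w ⊗≫ ι ◁ (D.evL ▷ κ) ⊗≫ 𝟙 (ι ≫ κ) := by
        rw [← whisker_exchange]
    _ = D.sR r ≫ D.conv u w := by dsimp only [conv, sR]; bicategory

end FrobeniusDuality
namespace FrobeniusDuality
universe w2 v2 u2
variable {C : Type u2} [Bicategory.{w2, v2} C] {a b : C}
variable {ι : a ⟶ b} {κ : b ⟶ a} (D : FrobeniusDuality ι κ)

/-- `x` with its `ι`-output bent to a `κ`-input by `coevR`/`evL` -/
def Cfun (v : ι ≫ κ ⟶ ι ≫ κ) : ι ≫ κ ⟶ ι ≫ κ :=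
  𝟙 (ι ≫ κ) ⊗≫ ι ◁ (D.coevR ▷ κ) ⊗≫ v ▷ (ι ≫ κ) ⊗≫ ι ◁ (D.evL ▷ κ) ⊗≫ 𝟙 (ι ≫ κ)

/-- the same bending as an endomorphism of `ι` -/
def CpreL (v : ι ≫ κ ⟶ ι ≫ κ) : ι ⟶ ι :=
  𝟙 ι ⊗≫ ι ◁ D.coevR ⊗≫ v ▷ ι ⊗≫ ι ◁ D.evL ⊗≫ 𝟙 ι

/-- ambient contraction used for the `A*`-nondegeneracy -/
def Phi (p : ι ≫ κ ⟶ ι ≫ κ) (w : (ι ≫ κ) ≫ ι ⟶ (ι ≫ κ) ≫ ι) : ι ≫ κ ⟶ ι ≫ κ :=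
  𝟙 (ι ≫ κ) ⊗≫ ι ◁ (D.coevR ▷ κ) ⊗≫ p ▷ (ι ≫ κ) ⊗≫ w ▷ κ ⊗≫
    (ι ≫ κ) ◁ D.evR ⊗≫ 𝟙 (ι ≫ κ)

/-- ambient contraction used for the `*A`-nondegeneracy -/
def Psi (u : ι ≫ κ ⟶ ι ≫ κ) (w : (ι ≫ κ) ≫ ι ⟶ (ι ≫ κ) ≫ ι) : ι ≫ κ ⟶ ι ≫ κ :=
  𝟙 (ι ≫ κ) ⊗≫ D.coevL ▷ (ι ≫ κ) ⊗≫ (ι ◁ (D.coevR ▷ κ)) ▷ (ι ≫ κ) ⊗≫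
    (ι ≫ κ) ◁ (w ▷ κ) ⊗≫ (ι ≫ κ ≫ ι ≫ κ) ◁ u ⊗≫
    (ι ≫ κ ≫ ι) ◁ (D.evL ▷ κ) ⊗≫ (ι ≫ κ) ◁ D.evR ⊗≫ 𝟙 (ι ≫ κ)

/-- intermediate form of `conv p (SA x)` -/
def Rfun (p x : ι ≫ κ ⟶ ι ≫ κ) : ι ≫ κ ⟶ ι ≫ κ :=
  𝟙 (ι ≫ κ) ⊗≫ ι ◁ (D.coevR ▷ κ) ⊗≫ p ▷ (ι ≫ κ) ⊗≫
    (ι ◁ (D.coevR ▷ κ)) ▷ (ι ≫ κ) ⊗≫ (ι ≫ κ) ◁ (x ▷ (ι ≫ κ)) ⊗≫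
    (ι ≫ κ ≫ ι) ◁ (D.evL ▷ κ) ⊗≫ (ι ≫ κ) ◁ D.evR ⊗≫ 𝟙 (ι ≫ κ)

/-- `SA x` with the final `evR` split off -/
def Spre (x : ι ≫ κ ⟶ ι ≫ κ) : ι ⟶ (ι ≫ κ) ≫ ι :=
  𝟙 ι ⊗≫ D.coevL ▷ ι ⊗≫ ι ◁ D.Ftr x ⊗≫ 𝟙 ((ι ≫ κ) ≫ ι)

theorem Cfun_eq (v : ι ≫ κ ⟶ ι ≫ κ) : D.Cfun v = D.CpreL v ▷ κ := by
  dsimp only [Cfun, CpreL]; bicategory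

theorem SA_decomp (x : ι ≫ κ ⟶ ι ≫ κ) :
    D.SA x = 𝟙 (ι ≫ κ) ⊗≫ D.Spre x ▷ κ ⊗≫ (ι ≫ κ) ◁ D.evR ⊗≫ 𝟙 (ι ≫ κ) := by
  dsimp only [SA, FdotInv, Spre]; bicategory

theorem Phi_id (p : ι ≫ κ ⟶ ι ≫ κ) : D.Phi p (𝟙 ((ι ≫ κ) ≫ ι)) = p := by
  calc D.Phi p (𝟙 ((ι ≫ κ) ≫ ι))
      = 𝟙 (ι ≫ κ) ⊗≫ ι ◁ (D.coevR ▷ κ) ⊗≫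
          (p ▷ (ι ≫ κ) ≫ (ι ≫ κ) ◁ D.evR) ⊗≫ 𝟙 (ι ≫ κ) := by
        dsimp only [Phi]; bicategory
    _ = 𝟙 (ι ≫ κ) ⊗≫ ι ◁ (D.coevR ▷ κ) ⊗≫
          ((ι ≫ κ) ◁ D.evR ≫ p ▷ 𝟙 a) ⊗≫ 𝟙 (ι ≫ κ) := by
        rw [← whisker_exchange]
    _ = 𝟙 (ι ≫ κ) ⊗≫ ι ◁ (D.coevR ▷ κ ⊗≫ κ ◁ D.evR) ⊗≫ p ⊗≫ 𝟙 (ι ≫ κ) := by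
        bicategory
    _ = p := by rw [D.z4]; bicategory

theorem Cfun_d2comp (p x y : ι ≫ κ ⟶ ι ≫ κ) :
    D.Phi p (D.d2comp x y) = D.Cfun (p ≫ x) ≫ y := by
  calc D.Phi p (D.d2comp x y)
      = 𝟙 (ι ≫ κ) ⊗≫ ι ◁ (D.coevR ▷ κ) ⊗≫ p ▷ (ι ≫ κ) ⊗≫ x ▷ (ι ≫ κ) ⊗≫
          ι ◁ (D.evL ▷ κ) ⊗≫ ι ◁ (D.coevR ▷ κ) ⊗≫
          (y ▷ (ι ≫ κ) ≫ (ι ≫ κ) ◁ D.evR) ⊗≫ 𝟙 (ι ≫ κ) := by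
        dsimp only [Phi, d2comp]; bicategory
    _ = 𝟙 (ι ≫ κ) ⊗≫ ι ◁ (D.coevR ▷ κ) ⊗≫ p ▷ (ι ≫ κ) ⊗≫ x ▷ (ι ≫ κ) ⊗≫
          ι ◁ (D.evL ▷ κ) ⊗≫ ι ◁ (D.coevR ▷ κ) ⊗≫
          ((ι ≫ κ) ◁ D.evR ≫ y ▷ 𝟙 a) ⊗≫ 𝟙 (ι ≫ κ) := by
        rw [← whisker_exchange]
    _ = 𝟙 (ι ≫ κ) ⊗≫ ι ◁ (D.coevR ▷ κ) ⊗≫ p ▷ (ι ≫ κ) ⊗≫ x ▷ (ι ≫ κ) ⊗≫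
          ι ◁ (D.evL ▷ κ) ⊗≫ ι ◁ (D.coevR ▷ κ ⊗≫ κ ◁ D.evR) ⊗≫ y ⊗≫ 𝟙 (ι ≫ κ) := by
        bicategory
    _ = D.Cfun (p ≫ x) ≫ y := by rw [D.z4]; dsimp only [Cfun]; bicategory

end FrobeniusDuality
namespace FrobeniusDuality
universe w2 v2 u2
variable {C : Type u2} [Bicategory.{w2, v2} C] {a b : C}
variable {ι : a ⟶ b} {κ : b ⟶ a} (D : FrobeniusDuality ι κ)

theorem conv_SA (p x : ι ≫ κ ⟶ ι ≫ κ) : D.conv p (D.SA x) = D.Rfun p x := by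
  calc D.conv p (D.SA x)
      = 𝟙 (ι ≫ κ) ⊗≫ ι ◁ (D.coevR ▷ κ) ⊗≫ p ▷ (ι ≫ κ) ⊗≫
          (ι ≫ κ) ◁ (D.coevL ▷ (ι ≫ κ)) ⊗≫
          ((ι ≫ κ ≫ ι) ◁ (D.Ftr x ▷ κ ⊗≫ κ ◁ D.evR) ≫
            (ι ◁ D.evL) ▷ (κ ≫ 𝟙 a)) ⊗≫ 𝟙 (ι ≫ κ) := by
        dsimp only [conv, SA, FdotInv]; bicategory
    _ = 𝟙 (ι ≫ κ) ⊗≫ ι ◁ (D.coevR ▷ κ) ⊗≫ p ▷ (ι ≫ κ) ⊗≫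
          (ι ≫ κ) ◁ (D.coevL ▷ (ι ≫ κ)) ⊗≫
          ((ι ◁ D.evL) ▷ ((κ ≫ ι) ≫ κ) ≫
            (ι ≫ 𝟙 b) ◁ (D.Ftr x ▷ κ ⊗≫ κ ◁ D.evR)) ⊗≫ 𝟙 (ι ≫ κ) := by
        rw [whisker_exchange]
    _ = 𝟙 (ι ≫ κ) ⊗≫ ι ◁ (D.coevR ▷ κ) ⊗≫ p ▷ (ι ≫ κ) ⊗≫
          ι ◁ ((κ ◁ D.coevL ⊗≫ D.evL ▷ κ) ▷ (ι ≫ κ)) ⊗≫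
          ι ◁ (D.Ftr x ▷ κ ⊗≫ κ ◁ D.evR) ⊗≫ 𝟙 (ι ≫ κ) := by
        bicategory
    _ = D.Rfun p x := by rw [D.z2]; dsimp only [Rfun, Ftr]; bicategory

theorem Pfun_Rfun (p x : ι ≫ κ ⟶ ι ≫ κ) :
    D.Pfun (D.Rfun p x) = D.Pfun (D.Cfun (p ≫ x)) := by
  calc D.Pfun (D.Rfun p x)
      = 𝟙 κ ⊗≫ D.coevR ▷ κ ⊗≫ κ ◁ (ι ◁ (D.coevR ▷ κ)) ⊗≫ κ ◁ (p ▷ (ι ≫ κ)) ⊗≫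
          κ ◁ ((ι ◁ (D.coevR ▷ κ)) ▷ (ι ≫ κ)) ⊗≫
          κ ◁ ((ι ≫ κ) ◁ (x ▷ (ι ≫ κ) ⊗≫ ι ◁ (D.evL ▷ κ) ⊗≫ D.evR) ≫
            D.evR ▷ 𝟙 a) ⊗≫ 𝟙 κ := by
        dsimp only [Pfun, Rfun]; bicategory
    _ = 𝟙 κ ⊗≫ D.coevR ▷ κ ⊗≫ κ ◁ (ι ◁ (D.coevR ▷ κ)) ⊗≫ κ ◁ (p ▷ (ι ≫ κ)) ⊗≫
          κ ◁ ((ι ◁ (D.coevR ▷ κ)) ▷ (ι ≫ κ)) ⊗≫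
          κ ◁ (D.evR ▷ ((ι ≫ κ) ≫ ι ≫ κ) ≫
            𝟙 a ◁ (x ▷ (ι ≫ κ) ⊗≫ ι ◁ (D.evL ▷ κ) ⊗≫ D.evR)) ⊗≫ 𝟙 κ := by
        rw [← whisker_exchange]
    _ = 𝟙 κ ⊗≫ D.coevR ▷ κ ⊗≫ κ ◁ (ι ◁ (D.coevR ▷ κ)) ⊗≫ κ ◁ (p ▷ (ι ≫ κ)) ⊗≫
          κ ◁ ((ι ◁ D.coevR ⊗≫ D.evR ▷ ι) ▷ (κ ≫ ι ≫ κ)) ⊗≫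
          κ ◁ (x ▷ (ι ≫ κ) ⊗≫ ι ◁ (D.evL ▷ κ) ⊗≫ D.evR) ⊗≫ 𝟙 κ := by
        bicategory
    _ = D.Pfun (D.Cfun (p ≫ x)) := by rw [D.z3]; dsimp only [Pfun, Cfun]; bicategory

theorem sR_Pfun_SA (u y' x : ι ≫ κ ⟶ ι ≫ κ) :
    D.sR (D.Pfun (D.conv y' u)) ≫ D.SA x = D.Psi u (D.d2comp x y') := by
  calc D.sR (D.Pfun (D.conv y' u)) ≫ D.SA x
      = 𝟙 (ι ≫ κ) ⊗≫ (ι ◁ D.Pfun (D.conv y' u) ≫ D.Spre x ▷ κ) ⊗≫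
          (ι ≫ κ) ◁ D.evR ⊗≫ 𝟙 (ι ≫ κ) := by
        dsimp only [sR]; rw [SA_decomp]; bicategory
    _ = 𝟙 (ι ≫ κ) ⊗≫ (D.Spre x ▷ κ ≫ ((ι ≫ κ) ≫ ι) ◁ D.Pfun (D.conv y' u)) ⊗≫
          (ι ≫ κ) ◁ D.evR ⊗≫ 𝟙 (ι ≫ κ) := by
        rw [whisker_exchange]
    _ = 𝟙 (ι ≫ κ) ⊗≫ D.Spre x ▷ κ ⊗≫ ((ι ≫ κ) ≫ ι) ◁ (D.coevR ▷ κ) ⊗≫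
          (ι ≫ κ) ◁ ((ι ≫ κ) ◁ (D.conv y' u ≫ D.evR) ≫ D.evR ▷ 𝟙 a) ⊗≫
          𝟙 (ι ≫ κ) := by
        dsimp only [Pfun]; bicategory
    _ = 𝟙 (ι ≫ κ) ⊗≫ D.Spre x ▷ κ ⊗≫ ((ι ≫ κ) ≫ ι) ◁ (D.coevR ▷ κ) ⊗≫
          (ι ≫ κ) ◁ (D.evR ▷ (ι ≫ κ) ≫ 𝟙 a ◁ (D.conv y' u ≫ D.evR)) ⊗≫
          𝟙 (ι ≫ κ) := by
        rw [← whisker_exchange]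
    _ = 𝟙 (ι ≫ κ) ⊗≫ D.Spre x ▷ κ ⊗≫
          (ι ≫ κ) ◁ ((ι ◁ D.coevR ⊗≫ D.evR ▷ ι) ▷ κ) ⊗≫
          (ι ≫ κ) ◁ (D.conv y' u ≫ D.evR) ⊗≫ 𝟙 (ι ≫ κ) := by
        bicategory
    _ = D.Psi u (D.d2comp x y') := by
        rw [D.z3]; dsimp only [Psi, d2comp, Spre, Ftr, conv]; bicategory

theorem Psi_id (u : ι ≫ κ ⟶ ι ≫ κ) : D.Psi u (𝟙 ((ι ≫ κ) ≫ ι)) = u := by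
  calc D.Psi u (𝟙 ((ι ≫ κ) ≫ ι))
      = 𝟙 (ι ≫ κ) ⊗≫ D.coevL ▷ (ι ≫ κ) ⊗≫
          (((ρ_ ι).inv ≫ ι ◁ D.coevR) ▷ (κ ≫ ι ≫ κ) ≫
            (ι ≫ κ ≫ ι) ◁ (κ ◁ u ⊗≫ D.evL ▷ κ)) ⊗≫
          (ι ≫ κ) ◁ D.evR ⊗≫ 𝟙 (ι ≫ κ) := by
        dsimp only [Psi]; bicategory
    _ = 𝟙 (ι ≫ κ) ⊗≫ D.coevL ▷ (ι ≫ κ) ⊗≫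
          (ι ◁ (κ ◁ u ⊗≫ D.evL ▷ κ) ≫
            ((ρ_ ι).inv ≫ ι ◁ D.coevR) ▷ (𝟙 b ≫ κ)) ⊗≫
          (ι ≫ κ) ◁ D.evR ⊗≫ 𝟙 (ι ≫ κ) := by
        rw [← whisker_exchange]
    _ = 𝟙 (ι ≫ κ) ⊗≫ (D.coevL ▷ (ι ≫ κ) ≫ (ι ≫ κ) ◁ u) ⊗≫ ι ◁ (D.evL ▷ κ) ⊗≫
          ι ◁ (D.coevR ▷ κ) ⊗≫ (ι ≫ κ) ◁ D.evR ⊗≫ 𝟙 (ι ≫ κ) := by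
        bicategory
    _ = 𝟙 (ι ≫ κ) ⊗≫ (𝟙 a ◁ u ≫ D.coevL ▷ (ι ≫ κ)) ⊗≫ ι ◁ (D.evL ▷ κ) ⊗≫
          ι ◁ (D.coevR ▷ κ) ⊗≫ (ι ≫ κ) ◁ D.evR ⊗≫ 𝟙 (ι ≫ κ) := by
        rw [← whisker_exchange]
    _ = u ⊗≫ ((D.coevL ▷ ι ⊗≫ ι ◁ D.evL) ▷ κ) ⊗≫
          ι ◁ (D.coevR ▷ κ ⊗≫ κ ◁ D.evR) ⊗≫ 𝟙 (ι ≫ κ) := by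
        bicategory
    _ = u := by rw [D.z1, D.z4]; bicategory

end FrobeniusDuality
namespace FrobeniusDuality
universe w2 v2 u2
variable {C : Type u2} [Bicategory.{w2, v2} C] {a b : C}
variable {ι : a ⟶ b} {κ : b ⟶ a} (D : FrobeniusDuality ι κ)

theorem nuInvD_Pfun (z : ι ≫ κ ⟶ ι ≫ κ) :
    D.nuInvD (D.Pfun z) = D.RecL (z ≫ D.evR) := by
  rw [nuInvD_eq, evR_Pfun]

theorem tR_Pfun_Cfun (v : ι ≫ κ ⟶ ι ≫ κ) : D.tR (D.Pfun (D.Cfun v)) = D.Cfun v := by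
  rw [tR_eq, nuInvD_Pfun, Cfun_eq, recEq2, ← Cfun_eq]

/-- per-term identity for the `A*` nondegeneracy -/
theorem term4 (p x y : ι ≫ κ ⟶ ι ≫ κ) :
    D.tR (D.Pfun (D.conv p (D.SA x))) ≫ y = D.Phi p (D.d2comp x y) := by
  rw [conv_SA, Pfun_Rfun, tR_Pfun_Cfun, Cfun_d2comp]

theorem Pfun_conv_tR (r : κ ⟶ κ) (v u : ι ≫ κ ⟶ ι ≫ κ) :
    D.Pfun (D.conv (D.tR r ≫ v) u) = D.Pfun (D.conv v u) ≫ r := by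
  rw [tR_eq, conv_whiskerL, Pfun_tR]

theorem Pfun_conv_sR (r : κ ⟶ κ) (u w : ι ≫ κ ⟶ ι ≫ κ) :
    D.Pfun (D.conv u (D.sR r ≫ w)) = r ≫ D.Pfun (D.conv u w) := by
  rw [conv_sR, Pfun_sR]

section Additive
variable [∀ (x y : C), Preadditive (x ⟶ y)]

theorem whiskerR_zero
    (wr : ∀ {x y z : C} {f g : x ⟶ y} (η θ : f ⟶ g) (h : y ⟶ z),
      (η + θ) ▷ h = η ▷ h + θ ▷ h)
    {x y z : C} {f g : x ⟶ y} (h : y ⟶ z) : (0 : f ⟶ g) ▷ h = 0 := by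
  have := wr (0 : f ⟶ g) (0 : f ⟶ g) h
  rw [add_zero] at this
  exact add_eq_left.mp this.symm

theorem whiskerL_zero
    (wl : ∀ {x y z : C} (f : x ⟶ y) {g h : y ⟶ z} (η θ : g ⟶ h),
      f ◁ (η + θ) = f ◁ η + f ◁ θ)
    {x y z : C} (f : x ⟶ y) {g h : y ⟶ z} : f ◁ (0 : g ⟶ h) = 0 := by
  have := wl f (0 : g ⟶ h) (0 : g ⟶ h)
  rw [add_zero] at this
  exact add_eq_left.mp this.symm

theorem map_finsum {M N : Type*} [AddCommMonoid M] [AddCommMonoid N] (f : M → N)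
    (h0 : f 0 = 0) (hadd : ∀ p q, f (p + q) = f p + f q) (s : Finset ℕ) (g : ℕ → M) :
    f (∑ i ∈ s, g i) = ∑ i ∈ s, f (g i) := by
  classical
  induction s using Finset.cons_induction with
  | empty => simpa using h0
  | cons a s ha ih => rw [Finset.sum_cons, hadd, ih, Finset.sum_cons]

end Additive
end FrobeniusDuality
namespace FrobeniusDuality
universe w2 v2 u2
variable {C : Type u2} [Bicategory.{w2, v2} C] {a b : C}
variable {ι : a ⟶ b} {κ : b ⟶ a} (D : FrobeniusDuality ι κ)

set_option linter.unusedSectionVars false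
section Additive
variable [∀ (x y : C), Preadditive (x ⟶ y)]
variable (wl : ∀ {x y z : C} (f : x ⟶ y) {g h : y ⟶ z} (η θ : g ⟶ h),
      f ◁ (η + θ) = f ◁ η + f ◁ θ)
variable (wr : ∀ {x y z : C} {f g : x ⟶ y} (η θ : f ⟶ g) (h : y ⟶ z),
      (η + θ) ▷ h = η ▷ h + θ ▷ h)

include wl wr

theorem Phi_add (p : ι ≫ κ ⟶ ι ≫ κ) (w w' : (ι ≫ κ) ≫ ι ⟶ (ι ≫ κ) ≫ ι) :
    D.Phi p (w + w') = D.Phi p w + D.Phi p w' := by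
  dsimp only [Phi, bicategoricalComp]
  rw [wr]
  simp only [Preadditive.comp_add, Preadditive.add_comp]

theorem Phi_zero (p : ι ≫ κ ⟶ ι ≫ κ) : D.Phi p 0 = 0 := by
  dsimp only [Phi, bicategoricalComp]
  rw [whiskerR_zero wr]
  simp

theorem Psi_add (u : ι ≫ κ ⟶ ι ≫ κ) (w w' : (ι ≫ κ) ≫ ι ⟶ (ι ≫ κ) ≫ ι) :
    D.Psi u (w + w') = D.Psi u w + D.Psi u w' := by
  dsimp only [Psi, bicategoricalComp]
  rw [wr, wl]
  simp only [Preadditive.comp_add, Preadditive.add_comp]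

theorem Psi_zero (u : ι ≫ κ ⟶ ι ≫ κ) : D.Psi u 0 = 0 := by
  dsimp only [Psi, bicategoricalComp]
  rw [whiskerR_zero wr, whiskerL_zero wl]
  simp

theorem conv_add_left (v v' u : ι ≫ κ ⟶ ι ≫ κ) :
    D.conv (v + v') u = D.conv v u + D.conv v' u := by
  dsimp only [conv]
  rw [wr]
  simp only [Preadditive.comp_add, Preadditive.add_comp]

theorem conv_zero_left (u : ι ≫ κ ⟶ ι ≫ κ) : D.conv 0 u = 0 := by
  dsimp only [conv]
  rw [whiskerR_zero wr]
  simp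

theorem conv_add_right (u v v' : ι ≫ κ ⟶ ι ≫ κ) :
    D.conv u (v + v') = D.conv u v + D.conv u v' := by
  dsimp only [conv]
  rw [wl]
  simp only [Preadditive.comp_add, Preadditive.add_comp]

theorem conv_zero_right (u : ι ≫ κ ⟶ ι ≫ κ) : D.conv u 0 = 0 := by
  dsimp only [conv]
  rw [whiskerL_zero wl]
  simp

theorem Pfun_add (z z' : ι ≫ κ ⟶ ι ≫ κ) : D.Pfun (z + z') = D.Pfun z + D.Pfun z' := by
  dsimp only [Pfun]
  rw [Preadditive.add_comp, wl]
  simp only [Preadditive.comp_add, Preadditive.add_comp]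

theorem Pfun_zero : D.Pfun (0 : ι ≫ κ ⟶ ι ≫ κ) = 0 := by
  dsimp only [Pfun]
  rw [Limits.zero_comp, whiskerL_zero wl]
  simp

theorem QB1 (n : ℕ) (y x : ℕ → (ι ≫ κ ⟶ ι ≫ κ))
    (hqb : ∑ i ∈ Finset.range n, D.d2comp (x i) (y i) = 𝟙 ((ι ≫ κ) ≫ ι))
    (p : ι ≫ κ ⟶ ι ≫ κ) :
    ∑ i ∈ Finset.range n, (D.tR (D.Pfun (D.conv p (D.SA (x i)))) ≫ y i) = p := by
  calc ∑ i ∈ Finset.range n, (D.tR (D.Pfun (D.conv p (D.SA (x i)))) ≫ y i)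
      = ∑ i ∈ Finset.range n, D.Phi p (D.d2comp (x i) (y i)) :=
        Finset.sum_congr rfl (fun i _ => D.term4 p (x i) (y i))
    _ = D.Phi p (∑ i ∈ Finset.range n, D.d2comp (x i) (y i)) :=
        (map_finsum (D.Phi p) (D.Phi_zero wl wr p) (D.Phi_add wl wr p) _ _).symm
    _ = p := by rw [hqb, D.Phi_id]

theorem QB2 (n : ℕ) (y x : ℕ → (ι ≫ κ ⟶ ι ≫ κ))
    (hqb : ∑ i ∈ Finset.range n, D.d2comp (x i) (y i) = 𝟙 ((ι ≫ κ) ≫ ι))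
    (u : ι ≫ κ ⟶ ι ≫ κ) :
    ∑ i ∈ Finset.range n, (D.sR (D.Pfun (D.conv (y i) u)) ≫ D.SA (x i)) = u := by
  calc ∑ i ∈ Finset.range n, (D.sR (D.Pfun (D.conv (y i) u)) ≫ D.SA (x i))
      = ∑ i ∈ Finset.range n, D.Psi u (D.d2comp (x i) (y i)) :=
        Finset.sum_congr rfl (fun i _ => D.sR_Pfun_SA u (y i) (x i))
    _ = D.Psi u (∑ i ∈ Finset.range n, D.d2comp (x i) (y i)) :=
        (map_finsum (D.Psi u) (D.Psi_zero wl wr u) (D.Psi_add wl wr u) _ _).symm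
    _ = u := by rw [hqb, D.Psi_id]

end Additive
end FrobeniusDuality
open FrobeniusDuality in
/-- The element `i_A = coevL ∘ evR` is a two-sided non-degenerate integral
in the Hopf algebroid `A = C²(ι×κ, ι×κ)` of a D2 Frobenius 1-morphism `ι`: it is a left and
a right integral, it is `S_A`-invariant, and the maps `φ* ↦ φ*⇀i_A : A* → A` and
`*φ ↦ *φ⇁i_A : *A → A` from the right and left `R`-duals of `A` are bijections.
(The ring product of the paper is `u ∘ v = v ≫ u`; `γ_R(a) = ∑ᵢ (a ∗ S_A(xᵢ)) ⊗ yᵢ`.) -/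
theorem iA_two_sided_nondegenerate_integral
    {C : Type u} [Bicategory.{w, v} C] [∀ (x y : C), Preadditive (x ⟶ y)]
    (wl : ∀ {x y z : C} (f : x ⟶ y) {g h : y ⟶ z} (η θ : g ⟶ h),
      f ◁ (η + θ) = f ◁ η + f ◁ θ)
    (wr : ∀ {x y z : C} {f g : x ⟶ y} (η θ : f ⟶ g) (h : y ⟶ z),
      (η + θ) ▷ h = η ▷ h + θ ▷ h)
    {a b : C} {ι : a ⟶ b} {κ : b ⟶ a} (D : FrobeniusDuality ι κ)
    (n : ℕ) (y x : ℕ → (ι ≫ κ ⟶ ι ≫ κ))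
    (hqb : ∑ i ∈ Finset.range n, D.d2comp (x i) (y i) = 𝟙 ((ι ≫ κ) ≫ ι)) :
    -- left integral: `a ∘ i_A = s_L(π_L(a)) ∘ i_A`
    (∀ z : ι ≫ κ ⟶ ι ≫ κ, D.iA ≫ z = D.iA ≫ D.sL (D.piL z)) ∧
    -- right integral: `i_A ∘ a = i_A ∘ s_R(π_R(a))`
    (∀ z : ι ≫ κ ⟶ ι ≫ κ, z ≫ D.iA = D.sR (D.piR z) ≫ D.iA) ∧
    -- `S_A`-invariance
    D.SA D.iA = D.iA ∧
    -- non-degeneracy: `φ* ↦ φ*⇀i_A = i_A⁽²⁾ ∘ t_R(φ*(i_A⁽¹⁾))` is bijective on `A*`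
    Function.Bijective
      (fun φ : {φ : (ι ≫ κ ⟶ ι ≫ κ) → (κ ⟶ κ) //
          (∀ u v, φ (u + v) = φ u + φ v) ∧
          (∀ (r : κ ⟶ κ) u, φ (D.sR r ≫ u) = r ≫ φ u)} =>
        ∑ i ∈ Finset.range n, (D.tR (φ.1 (D.conv D.iA (D.SA (x i)))) ≫ y i)) ∧
    -- non-degeneracy: `*φ ↦ *φ⇁i_A = i_A⁽¹⁾ ∘ s_R(*φ(i_A⁽²⁾))` is bijective on `*A`
    Function.Bijective
      (fun φ : {φ : (ι ≫ κ ⟶ ι ≫ κ) → (κ ⟶ κ) //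
          (∀ u v, φ (u + v) = φ u + φ v) ∧
          (∀ (r : κ ⟶ κ) u, φ (D.tR r ≫ u) = φ u ≫ r)} =>
        ∑ i ∈ Finset.range n, (D.sR (φ.1 (y i)) ≫ D.conv D.iA (D.SA (x i)))) := by
  refine ⟨fun z => D.left_integral z, fun z => D.right_integral z, D.SA_iA, ?_, ?_⟩
  · -- A* nondegeneracy
    refine Function.bijective_iff_has_inverse.mpr
      ⟨fun p => ⟨fun u => D.Pfun (D.conv p u), fun u v => ?_, fun r u => ?_⟩, ?_, ?_⟩
    · dsimp only
      rw [D.conv_add_right wl wr, D.Pfun_add wl wr]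
    · exact D.Pfun_conv_sR r p u
    · intro φ
      apply Subtype.ext
      funext u
      have hφ0 : φ.1 0 = 0 := by
        have h := φ.2.1 0 0
        rw [add_zero] at h
        exact add_eq_left.mp h.symm
      calc D.Pfun (D.conv
            (∑ i ∈ Finset.range n, (D.tR (φ.1 (D.conv D.iA (D.SA (x i)))) ≫ y i)) u)
          = ∑ i ∈ Finset.range n,
              D.Pfun (D.conv (D.tR (φ.1 (D.SA (x i))) ≫ y i) u) := by
            simp_rw [D.conv_iA]
            exact map_finsum (fun v => D.Pfun (D.conv v u))
              (by rw [D.conv_zero_left wl wr, D.Pfun_zero wl wr])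
              (fun p q => by rw [D.conv_add_left wl wr, D.Pfun_add wl wr]) _ _
        _ = ∑ i ∈ Finset.range n, D.Pfun (D.conv (y i) u) ≫ φ.1 (D.SA (x i)) :=
            Finset.sum_congr rfl (fun i _ => D.Pfun_conv_tR _ _ _)
        _ = ∑ i ∈ Finset.range n, φ.1 (D.sR (D.Pfun (D.conv (y i) u)) ≫ D.SA (x i)) :=
            Finset.sum_congr rfl (fun i _ => (φ.2.2 _ _).symm)
        _ = φ.1 (∑ i ∈ Finset.range n, (D.sR (D.Pfun (D.conv (y i) u)) ≫ D.SA (x i))) :=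
            (map_finsum φ.1 hφ0 φ.2.1 _ _).symm
        _ = φ.1 u := by rw [D.QB2 wl wr n y x hqb u]
    · intro p
      show (∑ i ∈ Finset.range n,
          (D.tR (D.Pfun (D.conv p (D.conv D.iA (D.SA (x i))))) ≫ y i)) = p
      simp_rw [D.conv_iA]
      exact D.QB1 wl wr n y x hqb p
  · -- *A nondegeneracy
    refine Function.bijective_iff_has_inverse.mpr
      ⟨fun p => ⟨fun u => D.Pfun (D.conv u p), fun u v => ?_, fun r u => ?_⟩, ?_, ?_⟩
    · dsimp only
      rw [D.conv_add_left wl wr, D.Pfun_add wl wr]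
    · exact D.Pfun_conv_tR r u p
    · intro φ
      apply Subtype.ext
      funext u
      have hφ0 : φ.1 0 = 0 := by
        have h := φ.2.1 0 0
        rw [add_zero] at h
        exact add_eq_left.mp h.symm
      calc D.Pfun (D.conv u
            (∑ i ∈ Finset.range n, (D.sR (φ.1 (y i)) ≫ D.conv D.iA (D.SA (x i)))))
          = ∑ i ∈ Finset.range n,
              D.Pfun (D.conv u (D.sR (φ.1 (y i)) ≫ D.SA (x i))) := by
            simp_rw [D.conv_iA]
            exact map_finsum (fun v => D.Pfun (D.conv u v))
              (by rw [D.conv_zero_right wl wr, D.Pfun_zero wl wr])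
              (fun p q => by rw [D.conv_add_right wl wr, D.Pfun_add wl wr]) _ _
        _ = ∑ i ∈ Finset.range n, φ.1 (y i) ≫ D.Pfun (D.conv u (D.SA (x i))) :=
            Finset.sum_congr rfl (fun i _ => D.Pfun_conv_sR _ _ _)
        _ = ∑ i ∈ Finset.range n, φ.1 (D.tR (D.Pfun (D.conv u (D.SA (x i)))) ≫ y i) :=
            Finset.sum_congr rfl (fun i _ => (φ.2.2 _ _).symm)
        _ = φ.1 (∑ i ∈ Finset.range n, (D.tR (D.Pfun (D.conv u (D.SA (x i)))) ≫ y i)) :=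
            (map_finsum φ.1 hφ0 φ.2.1 _ _).symm
        _ = φ.1 u := by rw [D.QB1 wl wr n y x hqb u]
    · intro p
      show (∑ i ∈ Finset.range n,
          (D.sR (D.Pfun (D.conv (y i) p)) ≫ D.conv D.iA (D.SA (x i)))) = p
      simp_rw [D.conv_iA]
      exact D.QB2 wl wr n y x hqb p
end
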